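/- arXiv:1503.05608 — 6 statements merged into one kernel-verified Lean document; each statement's English description precedes it below -/
import Mathlib

section
/- Let M = (E, I) be a matroid on a finite ground set and let A, B ∈ I be independent sets. Let A_1, …, A_n be subsets of A such that each element of A appears in exactly q of them (q a positive integer). Then there exist sets B_1, …, B_n ⊆ B such that each element of B appears in at most q of them and, for each i, A_i ∪ (B ∖ B_i) ∈ I. -/
/-- A matroid on a finite ground set, given by its family of independent sets
(as a predicate on `Finset`s): the family is nonempty (contains `∅`),
downward closed, and satisfies the exchange axiom. -/
structure FinMatroid (E : Type*) [DecidableEq E] [Fintype E] where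
  Indep : Finset E → Prop
  empty_indep : Indep ∅
  indep_subset : ∀ ⦃A B : Finset E⦄, Indep B → A ⊆ B → Indep A
  indep_exchange : ∀ ⦃A B : Finset E⦄, Indep A → Indep B → A.card < B.card →
    ∃ x ∈ B \ A, Indep (insert x A)

/-!
Contracting `A ∩ B` reduces the theorem to disjoint `A` and `B`. For `t = n - q` it then
suffices to cover `t` copies `B × Fin t` of `B` by sets `Cᵢ`, each projecting injectively onto a
set `Kᵢ` independent in `M ／ Aᵢ`: every element of `B` lies in at least `t` of the `Kᵢ`, and
`Bᵢ = B \ Kᵢ` works. By Edmonds' matroid partition theorem such a cover exists as soon as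
`|S| ≤ ∑ᵢ r_{M ／ Aᵢ}(π S)` for all `S ⊆ B × Fin t`. To see this, extend `T = π S` to an
independent `T ∪ A'` with `A' ⊆ A` and `|A \ A'| ≤ |T|`; then
`r_{M ／ Aᵢ}(T) ≥ |T| - |Aᵢ \ A'|`, and summing over `i` costs `q |A \ A'| ≤ q |T|` because every
element of `A` lies in exactly `q` of the `Aᵢ`.

The partition theorem is proved by induction on the set to be covered. A new element `e` can be
absorbed by contracting it in one of the matroids `Mⱼ`, unless every `Mⱼ` spans `e` from a tight
set `Sⱼ`, i.e. one with `∑ᵢ rᵢ(Sⱼ) = |Sⱼ|`. By submodularity tight sets are closed under union,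
so `⋃ⱼ Sⱼ ∪ {e}` would violate the rank condition.
-/

open Set Function

theorem Set.sum_encard_inter_eq_encard_mul {α ι : Type*} [Fintype ι] (As : ι → Set α)
    {s : Set α} (hs : s.Finite) {q : ℕ} (h : ∀ x ∈ s, {i | x ∈ As i}.ncard = q) :
    ∑ i, (s ∩ As i).encard = s.encard * q := by
  classical
  induction s, hs using Set.Finite.induction_on with
  | empty => simp
  | @insert a s has hs ih =>
    have hi (i : ι) :
        (insert a s ∩ As i).encard = (s ∩ As i).encard + if a ∈ As i then 1 else 0 := by
      split_ifs with ha
      · rw [insert_inter_of_mem ha, encard_insert_of_notMem fun h => has h.1]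
      · rw [insert_inter_of_notMem ha, add_zero]
    simp_rw [hi, Finset.sum_add_distrib, Finset.sum_boole]
    rw [ih fun x hx => h x (mem_insert_of_mem a hx), encard_insert_of_notMem has, add_mul,
      one_mul, ← h a (mem_insert a s), ← Set.ncard_coe_finset]
    simp

theorem Set.card_le_ncard_setOf_mem_image_fst {α β ι : Type*} [Fintype β] [Finite ι]
    {Cs : ι → Set (α × β)} (hinj : ∀ i, InjOn Prod.fst (Cs i)) {x : α}
    (hx : ∀ b, ∃ i, (x, b) ∈ Cs i) : Fintype.card β ≤ {i | x ∈ Prod.fst '' Cs i}.ncard := by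
  choose f hf using hx
  rw [← Nat.card_eq_fintype_card, ← ncard_univ]
  refine ncard_le_ncard_of_injOn f (fun b _ => ⟨(x, b), hf b, rfl⟩) fun b _ b' _ hbb' => ?_
  have hb' : (x, b') ∈ Cs (f b) := hbb' ▸ hf b'
  exact congrArg Prod.snd (hinj (f b) (hf b) hb' rfl)

namespace Matroid

variable {α : Type*} {M : Matroid α} {I J S T U X : Set α} {e : α}

lemma Indep.eRk_contract_add_encard (hI : M.Indep I) (X : Set α) :
    (M ／ I).eRk X + I.encard = M.eRk (X ∪ I) := by
  obtain ⟨K, hK⟩ := (M ／ I).exists_isBasis (X ∩ (M ／ I).E)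
  have hdisj : Disjoint K I := (subset_sdiff.1 hK.indep.subset_ground).2
  have hground : X ∩ (M.E \ I) ∪ I = (X ∪ I) ∩ M.E := by
    have := hI.subset_ground
    ext x; simp only [mem_union, mem_inter_iff, mem_sdiff]; grind
  rw [← eRk_inter_ground, hK.eRk_eq_encard, ← encard_union_eq hdisj,
    (hI.union_isBasis_union_of_contract_isBasis hK).encard_eq_eRk, contract_ground, hground,
    eRk_inter_ground]

lemma IsNonloop.eRk_contractElem_add_one (he : M.IsNonloop e) (X : Set α) :
    (M ／ {e}).eRk X + 1 = M.eRk (insert e X) := by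
  rw [← encard_singleton e, he.indep.eRk_contract_add_encard, union_singleton]

lemma eRk_singleton_eq_zero_iff : M.eRk {e} = 0 ↔ ¬ M.IsNonloop e := by
  rw [← eRk_singleton_eq_one_iff]
  exact ⟨fun h => by simp [h], fun h => Order.lt_one_iff.1 ((M.eRk_singleton_le e).lt_of_ne h)⟩

lemma eRk_insert_le_of_subset (hSU : S ⊆ U) (hS : M.eRk S ≠ ⊤)
    (he : M.eRk (insert e S) ≤ M.eRk S) : M.eRk (insert e U) ≤ M.eRk U := by
  have hsub := M.eRk_submod (insert e S) U
  rw [insert_union, union_eq_right.2 hSU] at hsub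
  refine (ENat.add_le_add_iff_left hS).1 ?_
  calc M.eRk S + M.eRk (insert e U)
      ≤ M.eRk (insert e S ∩ U) + M.eRk (insert e U) := by
        gcongr; exact M.eRk_mono (subset_inter (subset_insert e S) hSU)
    _ ≤ M.eRk (insert e S) + M.eRk U := hsub
    _ ≤ M.eRk S + M.eRk U := by gcongr

section Partition

variable {ι : Type*} [Fintype ι] {Ms : ι → Matroid α}

lemma sum_eRk_union_le (hX : X.Finite) (h : ∀ S ⊆ X, S.encard ≤ ∑ i, (Ms i).eRk S)
    (hSX : S ⊆ X) (hS : ∑ i, (Ms i).eRk S ≤ S.encard) (hT : ∑ i, (Ms i).eRk T ≤ T.encard) :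
    ∑ i, (Ms i).eRk (S ∪ T) ≤ (S ∪ T).encard := by
  have hfin : (S ∩ T).encard ≠ ⊤ := ((hX.subset hSX).inter_of_left T).encard_lt_top.ne
  refine (ENat.add_le_add_iff_right hfin).1 ?_
  calc ∑ i, (Ms i).eRk (S ∪ T) + (S ∩ T).encard
      ≤ ∑ i, (Ms i).eRk (S ∪ T) + ∑ i, (Ms i).eRk (S ∩ T) := by
        gcongr; exact h _ (inter_subset_left.trans hSX)
    _ ≤ ∑ i, (Ms i).eRk S + ∑ i, (Ms i).eRk T := by
        rw [← Finset.sum_add_distrib, ← Finset.sum_add_distrib]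
        exact Finset.sum_le_sum fun i _ => by rw [add_comm]; exact (Ms i).eRk_submod S T
    _ ≤ S.encard + T.encard := add_le_add hS hT
    _ = (S ∪ T).encard + (S ∩ T).encard := (encard_union_add_encard_inter S T).symm

lemma sum_eRk_biUnion_le (hX : X.Finite) (h : ∀ S ⊆ X, S.encard ≤ ∑ i, (Ms i).eRk S)
    {κ : Type*} (s : Finset κ) {Ss : κ → Set α} (hSX : ∀ k, Ss k ⊆ X)
    (hS : ∀ k, ∑ i, (Ms i).eRk (Ss k) ≤ (Ss k).encard) :
    ∑ i, (Ms i).eRk (⋃ k ∈ s, Ss k) ≤ (⋃ k ∈ s, Ss k).encard := by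
  classical
  induction s using Finset.induction_on with
  | empty => simp
  | insert k s _ ih =>
    rw [Finset.set_biUnion_insert]
    exact sum_eRk_union_le hX h (hSX k) (hS k) ih

lemma sum_eRk_update_contractElem [DecidableEq ι] (j : ι) (S : Set α) :
    ∑ i, (update Ms j (Ms j ／ {e}) i).eRk S
      = (Ms j ／ {e}).eRk S + ∑ i ∈ Finset.univ.erase j, (Ms i).eRk S := by
  simp_rw [apply_update (fun _ N => Matroid.eRk N S)]
  rw [Finset.sum_update_of_mem (Finset.mem_univ j), Finset.sdiff_singleton_eq_erase]

lemma exists_tight_eRk_insert_le [DecidableEq ι] (h : ∀ S ⊆ X, S.encard ≤ ∑ i, (Ms i).eRk S)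
    (j : ι)
    (hj : (Ms j).IsNonloop e → ∃ S ⊆ X, ∑ i, (update Ms j (Ms j ／ {e}) i).eRk S < S.encard) :
    ∃ S ⊆ X, ∑ i, (Ms i).eRk S ≤ S.encard ∧ (Ms j).eRk (insert e S) ≤ (Ms j).eRk S := by
  by_cases he : (Ms j).IsNonloop e
  swap
  · refine ⟨∅, empty_subset X, by simp, ?_⟩
    rw [insert_empty_eq, eRk_empty, nonpos_iff_eq_zero, eRk_singleton_eq_zero_iff]
    exact he
  obtain ⟨S, hSX, hS⟩ := hj he
  rw [sum_eRk_update_contractElem] at hS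
  have hsplit := Finset.add_sum_erase Finset.univ (fun i => (Ms i).eRk S) (Finset.mem_univ j)
  set R := ∑ i ∈ Finset.univ.erase j, (Ms i).eRk S
  have hR : R ≠ ⊤ := (le_add_self.trans_lt (hS.trans_le le_top)).ne
  have hinsS : (Ms j).eRk (insert e S) + R ≤ S.encard := by
    rw [← he.eRk_contractElem_add_one, add_right_comm]
    exact Order.add_one_le_of_lt hS
  refine ⟨S, hSX, ?_, ?_⟩
  · rw [← hsplit]
    exact (add_le_add_left ((Ms j).eRk_mono (subset_insert e S)) R).trans hinsS
  · rw [← ENat.add_le_add_iff_right hR, hsplit]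
    exact hinsS.trans (h S hSX)

lemma exists_isNonloop_forall_encard_le_sum_eRk_update [DecidableEq ι] (hX : X.Finite)
    (heX : e ∉ X) (h : ∀ S ⊆ insert e X, S.encard ≤ ∑ i, (Ms i).eRk S) :
    ∃ j, (Ms j).IsNonloop e ∧
      ∀ S ⊆ X, S.encard ≤ ∑ i, (update Ms j (Ms j ／ {e}) i).eRk S := by
  by_contra! hcon
  choose Ss hSsX hSs hSse using fun j =>
    exists_tight_eRk_insert_le (fun S hS => h S (hS.trans (subset_insert e X))) j (hcon j)
  set U := ⋃ j ∈ Finset.univ, Ss j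
  have hUX : U ⊆ X := iUnion₂_subset fun j _ => hSsX j
  have hU : ∑ i, (Ms i).eRk U ≤ U.encard :=
    sum_eRk_biUnion_le (hX.insert e) h Finset.univ
      (fun j => (hSsX j).trans (subset_insert e X)) hSs
  have hUe : ∑ i, (Ms i).eRk (insert e U) ≤ ∑ i, (Ms i).eRk U :=
    Finset.sum_le_sum fun j _ => eRk_insert_le_of_subset
      (subset_biUnion_of_mem (u := Ss) (Finset.mem_coe.2 (Finset.mem_univ j)))
      (((Ms j).eRk_le_encard _).trans_lt (hX.subset (hSsX j)).encard_lt_top).ne (hSse j)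
  have hins := h (insert e U) (insert_subset_insert hUX)
  rw [encard_insert_of_notMem fun heU => heX (hUX heU)] at hins
  exact ((ENat.add_one_le_iff (hX.subset hUX).encard_lt_top.ne).1
    (hins.trans (hUe.trans hU))).false

theorem exists_indep_cover_of_encard_le_sum_eRk (Ms : ι → Matroid α) (hX : X.Finite)
    (h : ∀ S ⊆ X, S.encard ≤ ∑ i, (Ms i).eRk S) :
    ∃ Is : ι → Set α, (∀ i, (Ms i).Indep (Is i)) ∧ X ⊆ ⋃ i, Is i := by
  classical
  induction X, hX using Set.Finite.induction_on generalizing Ms with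
  | empty => exact ⟨fun _ => ∅, fun i => (Ms i).empty_indep, empty_subset _⟩
  | @insert e X heX hX ih =>
    obtain ⟨j, hej, hj⟩ := exists_isNonloop_forall_encard_le_sum_eRk_update hX heX h
    obtain ⟨Is, hIs, hXIs⟩ := ih _ hj
    have hsub (i : ι) : Is i ⊆ update Is j (insert e (Is j)) i := by
      rcases eq_or_ne i j with rfl | hij
      · simp
      · simp [hij]
    refine ⟨update Is j (insert e (Is j)), fun i => ?_,
      insert_subset (mem_iUnion.2 ⟨j, by simp⟩) (hXIs.trans (iUnion_mono hsub))⟩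
    rcases eq_or_ne i j with rfl | hij
    · have hIi := hIs i
      rw [update_self, hej.contractElem_indep_iff] at hIi
      simpa using hIi.2
    · simpa [hij] using hIs i

end Partition

lemma Indep.exists_subset_union_indep_encard_sdiff_le (hT : M.Indep T) (hI : M.Indep I)
    (hIfin : I.Finite) : ∃ J ⊆ I, M.Indep (T ∪ J) ∧ (I \ J).encard ≤ T.encard := by
  obtain ⟨V, hV, hTV⟩ := hT.subset_isBasis_of_subset (subset_union_left (t := I))
  have hVT : V \ T ⊆ I := fun x hx => (hV.subset hx.1).resolve_left hx.2
  refine ⟨V \ T, hVT, by rw [union_sdiff_cancel hTV]; exact hV.indep, ?_⟩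
  have hfin : (V \ T).encard ≠ ⊤ := (hIfin.subset hVT).encard_lt_top.ne
  refine (ENat.add_le_add_iff_right hfin).1 ?_
  calc (I \ (V \ T)).encard + (V \ T).encard = I.encard :=
        encard_sdiff_add_encard_of_subset hVT
    _ ≤ V.encard := by
      rw [hV.encard_eq_eRk]; exact hI.encard_le_eRk_of_subset subset_union_right
    _ = T.encard + (V \ T).encard := by
      rw [← encard_union_eq disjoint_sdiff_right, union_sdiff_cancel hTV]

lemma Indep.encard_le_eRk_contract_add_encard_sdiff (hI : M.Indep I) (hTJ : M.Indep (T ∪ J))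
    (hTI : Disjoint T I) (hIfin : I.Finite) : T.encard ≤ (M ／ I).eRk T + (I \ J).encard := by
  have hfin : (I ∩ J).encard ≠ ⊤ := (hIfin.inter_of_left J).encard_lt_top.ne
  refine (ENat.add_le_add_iff_right hfin).1 ?_
  calc T.encard + (I ∩ J).encard = (T ∪ (I ∩ J)).encard :=
        (encard_union_eq (hTI.mono_right inter_subset_left)).symm
    _ = M.eRk (T ∪ (I ∩ J)) :=
        (hTJ.subset (union_subset_union_right T inter_subset_right)).eRk_eq_encard.symm
    _ ≤ M.eRk (T ∪ I) := M.eRk_mono (union_subset_union_right T inter_subset_left)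
    _ = (M ／ I).eRk T + (I \ J).encard + (I ∩ J).encard := by
      rw [← hI.eRk_contract_add_encard, add_assoc, encard_sdiff_add_encard_inter]

section Exchange

variable {ι : Type*} [Fintype ι] {A B : Set α} {As : ι → Set α} {q : ℕ}

lemma mul_encard_le_sum_eRk_contract (hA : M.Indep A) (hAfin : A.Finite) (hT : M.Indep T)
    (hTfin : T.Finite) (hAT : Disjoint A T) (hAs : ∀ i, As i ⊆ A)
    (hcover : ∀ x ∈ A, {i | x ∈ As i}.ncard = q) {t : ℕ} (ht : t + q ≤ Fintype.card ι) :
    t * T.encard ≤ ∑ i, (M ／ As i).eRk T := by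
  obtain ⟨J, -, hTJ, hJ⟩ := hT.exists_subset_union_indep_encard_sdiff_le hA hAfin
  have hdouble : ∑ i, (As i \ J).encard = (A \ J).encard * q := by
    rw [← sum_encard_inter_eq_encard_mul As hAfin.sdiff fun x hx => hcover x hx.1]
    refine Finset.sum_congr rfl fun i _ => ?_
    rw [inter_comm, ← inter_sdiff_assoc, inter_eq_left.2 (hAs i)]
  have hqT : q * T.encard ≠ ⊤ :=
    WithTop.mul_ne_top (ENat.natCast_ne_top q) hTfin.encard_lt_top.ne
  refine (ENat.add_le_add_iff_right hqT).1 ?_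
  calc t * T.encard + q * T.encard ≤ Fintype.card ι * T.encard := by
        rw [← add_mul]; gcongr; exact_mod_cast ht
    _ = ∑ _ : ι, T.encard := by simp
    _ ≤ ∑ i, ((M ／ As i).eRk T + (As i \ J).encard) := Finset.sum_le_sum fun i _ =>
      (hA.subset (hAs i)).encard_le_eRk_contract_add_encard_sdiff hTJ
        (hAT.mono_left (hAs i)).symm (hAfin.subset (hAs i))
    _ = ∑ i, (M ／ As i).eRk T + (A \ J).encard * q := by
      rw [Finset.sum_add_distrib, hdouble]
    _ ≤ ∑ i, (M ／ As i).eRk T + q * T.encard := by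
      rw [mul_comm]; gcongr

theorem exists_indep_union_of_disjoint [Finite α] (hA : M.Indep A) (hB : M.Indep B)
    (hAB : Disjoint A B) (hAs : ∀ i, As i ⊆ A) (hcover : ∀ x ∈ A, {i | x ∈ As i}.ncard = q)
    {t : ℕ} (ht : t + q ≤ Fintype.card ι) :
    ∃ Ks : ι → Set α, (∀ i, Ks i ⊆ B) ∧ (∀ x ∈ B, t ≤ {i | x ∈ Ks i}.ncard) ∧
      ∀ i, M.Indep (As i ∪ Ks i) := by
  have hrank : ∀ S ⊆ B ×ˢ (univ : Set (Fin t)),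
      S.encard ≤ ∑ i, ((M ／ As i).comap Prod.fst).eRk S := by
    intro S hS
    have hTB : Prod.fst '' S ⊆ B := by rintro _ ⟨p, hp, rfl⟩; exact (hS hp).1
    simp only [eRk_comap]
    calc S.encard ≤ ((Prod.fst '' S) ×ˢ (univ : Set (Fin t))).encard :=
          encard_le_encard fun p hp => ⟨mem_image_of_mem _ hp, mem_univ _⟩
      _ = t * (Prod.fst '' S).encard := by simp [encard_prod, mul_comm]
      _ ≤ _ := mul_encard_le_sum_eRk_contract hA (toFinite A) (hB.subset hTB) (toFinite _)
          (hAB.mono_right hTB) hAs hcover ht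
  obtain ⟨Cs, hCs, hcov⟩ := exists_indep_cover_of_encard_le_sum_eRk _ (toFinite _) hrank
  refine ⟨fun i => Prod.fst '' Cs i ∩ B, fun i => inter_subset_right, fun x hx => ?_,
    fun i => ?_⟩
  · simpa [hx] using card_le_ncard_setOf_mem_image_fst (fun i => (comap_indep_iff.1 (hCs i)).2)
      fun b => mem_iUnion.1 (hcov ⟨hx, mem_univ b⟩)
  · have hKi := (comap_indep_iff.1 (hCs i)).1.subset (inter_subset_left (t := B))
    rw [(hA.subset (hAs i)).contract_indep_iff, union_comm] at hKi
    exact hKi.2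

theorem exists_rota_exchange [Finite α] (hA : M.Indep A) (hB : M.Indep B)
    (hAs : ∀ i, As i ⊆ A) (hcover : ∀ x ∈ A, {i | x ∈ As i}.ncard = q) :
    ∃ Bs : ι → Set α, (∀ i, Bs i ⊆ B) ∧ (∀ x ∈ B, {i | x ∈ Bs i}.ncard ≤ q) ∧
      ∀ i, M.Indep (As i ∪ (B \ Bs i)) := by
  rcases le_or_gt (Fintype.card ι) q with hq | hq
  · refine ⟨fun _ => B, fun _ => subset_rfl, fun x _ => ?_, fun i => ?_⟩
    · exact (ncard_le_card _).trans (Nat.card_eq_fintype_card (α := ι) ▸ hq)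
    · simpa using hA.subset (hAs i)
  have hC : M.Indep (A ∩ B) := hA.subset inter_subset_left
  have hA' : (M ／ (A ∩ B)).Indep (A \ B) := by
    rw [hC.contract_indep_iff, sdiff_union_inter]
    exact ⟨disjoint_sdiff_left.mono_right inter_subset_right, hA⟩
  have hB' : (M ／ (A ∩ B)).Indep (B \ A) := by
    rw [hC.contract_indep_iff, inter_comm, sdiff_union_inter]
    exact ⟨disjoint_sdiff_left.mono_right inter_subset_right, hB⟩
  obtain ⟨Ks, hKs, hcount, hind⟩ := exists_indep_union_of_disjoint hA' hB' disjoint_sdiff_sdiff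
    (As := fun i => As i \ B) (fun i => sdiff_subset_sdiff_left (hAs i))
    (fun x hx => by simpa [hx.2] using hcover x hx.1) (t := Fintype.card ι - q) (by omega)
  refine ⟨fun i => (B \ A) \ Ks i, fun i => sdiff_subset.trans sdiff_subset, fun x hx => ?_,
    fun i => ?_⟩
  · by_cases hxA : x ∈ A
    · simp [hxA]
    · have hcompl : {i | x ∈ (B \ A) \ Ks i} = {i | x ∈ Ks i}ᶜ := by ext; simp [hx, hxA]
      have := hcount x ⟨hx, hxA⟩
      rw [hcompl, ncard_compl, Nat.card_eq_fintype_card]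
      omega
  · refine (hC.contract_indep_iff.1 (hind i)).2.subset fun x hx => ?_
    have := @hAs i x
    simp only [mem_union, mem_sdiff, mem_inter_iff] at hx ⊢
    tauto

end Exchange

end Matroid

namespace FinMatroid

variable {E : Type*} [DecidableEq E] [Fintype E] (M : FinMatroid E)

def toMatroid : Matroid E :=
  (IndepMatroid.ofFinset univ M.Indep M.empty_indep M.indep_subset
    (fun _ _ hI hJ hlt => by
      obtain ⟨x, hx, hxI⟩ := M.indep_exchange hI hJ hlt
      exact ⟨x, (Finset.mem_sdiff.1 hx).1, (Finset.mem_sdiff.1 hx).2, hxI⟩)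
    fun _ _ => subset_univ _).matroid

@[simp] lemma toMatroid_indep_coe_iff {I : Finset E} : M.toMatroid.Indep I ↔ M.Indep I := by
  simp [toMatroid]

end FinMatroid

open Classical in
theorem generalized_rota_exchange_general
    {E : Type*} [DecidableEq E] [Fintype E] (M : FinMatroid E)
    (A B : Finset E) (hA : M.Indep A) (hB : M.Indep B)
    (n : ℕ) (q : ℕ)
    (As : Fin n → Finset E) (hAs : ∀ i, As i ⊆ A)
    (hcover : ∀ x ∈ A, (Finset.univ.filter fun i => x ∈ As i).card = q) :
    ∃ Bs : Fin n → Finset E,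
      (∀ i, Bs i ⊆ B) ∧
      (∀ x ∈ B, (Finset.univ.filter fun i => x ∈ Bs i).card ≤ q) ∧
      (∀ i, M.Indep (As i ∪ (B \ Bs i))) := by
  obtain ⟨Bs, hBs, hcount, hind⟩ := M.toMatroid.exists_rota_exchange
    (M.toMatroid_indep_coe_iff.2 hA) (M.toMatroid_indep_coe_iff.2 hB)
    (As := fun i => As i) (fun i => Finset.coe_subset.2 (hAs i)) (q := q)
    fun x hx => by simpa [← Set.ncard_coe_finset] using hcover x hx
  refine ⟨fun i => (Bs i).toFinset, fun i => ?_, fun x hx => ?_, fun i => ?_⟩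
  · simpa [← Finset.coe_subset] using hBs i
  · simpa [← Set.ncard_coe_finset] using hcount x hx
  · simpa [← M.toMatroid_indep_coe_iff] using hind i

open Classical in
/-- **Generalized Rota Exchange** (Lee–Sviridenko–Vondrák).
If `A, B` are independent in a matroid and `A₁, …, Aₙ ⊆ A` are such that each element
of `A` lies in exactly `q` of them (`q` a positive integer), then there are sets
`B₁, …, Bₙ ⊆ B` such that each element of `B` lies in at most `q` of them and
`Aᵢ ∪ (B \ Bᵢ)` is independent for each `i`. -/
theorem generalized_rota_exchange
    {E : Type*} [DecidableEq E] [Fintype E] (M : FinMatroid E)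
    (A B : Finset E) (hA : M.Indep A) (hB : M.Indep B)
    (n : ℕ) (q : ℕ) (hq : 0 < q)
    (As : Fin n → Finset E) (hAs : ∀ i, As i ⊆ A)
    (hcover : ∀ x ∈ A, (Finset.univ.filter fun i => x ∈ As i).card = q) :
    ∃ Bs : Fin n → Finset E,
      (∀ i, Bs i ⊆ B) ∧
      (∀ x ∈ B, (Finset.univ.filter fun i => x ∈ Bs i).card ≤ q) ∧
      (∀ i, M.Indep (As i ∪ (B \ Bs i))) :=
  generalized_rota_exchange_general M A B hA hB n q As hAs hcover
end

section
/- Let M = (E, I) be a matroid whose ground set is partitioned among n players, let w : E → ℝ≥0 be weights defining additive valuations v_i(X) = Σ_{t∈X} w_t for X ⊆ E_i, and let S* ∈ I maximize Σ_{t∈S*} w_t over I. Let b : E → ℝ≥0 be any bid profile and let S ∈ I maximize Σ_{t∈S} b_t over I. For each player i let b^i be the bid profile with b^i_t = (2/3)·w_t for t ∈ E_i and b^i_t = b_t for t ∉ E_i, and let S^i ∈ I be any set maximizing Σ_{t∈S^i} b^i_t over I. Then Σ_{i=1}^n Σ_{t ∈ S^i ∩ E_i} (w_t − (2/3)·w_t)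 ≥ (1/3)·Σ_{t∈S*} w_t − Σ_{t∈S} b_t. (That is, the greedy first-price matroid mechanism is (1/3,1)-smooth for additive valuations, witnessed by each player deviating to bidding two thirds of her values.) -/
open Finset

theorem Finset.sum_lt_of_card_le_one {α R : Type*} [AddCommMonoid R] [LT R]
    {s : Finset α} {f : α → R} {θ : R} (hs : #s ≤ 1) (hθ : 0 < θ) (hf : ∀ x ∈ s, f x < θ) :
    ∑ x ∈ s, f x < θ := by
  rcases Nat.le_one_iff_eq_zero_or_eq_one.1 hs with h0 | h1
  · rwa [card_eq_zero.1 h0, sum_empty]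
  · obtain ⟨x, rfl⟩ := card_eq_one.1 h1
    rw [sum_singleton]
    exact hf x (mem_singleton_self x)

theorem Finset.sum_le_sum_of_card_filter_le {α β R : Type*} [AddCommMonoid R] [LinearOrder R]
    [IsOrderedAddMonoid R] (A : Finset α) {B : Finset β} {f : α → R} {g : β → R}
    (hg : ∀ y ∈ B, 0 ≤ g y) (h : ∀ θ, 0 < θ → #{x ∈ A | θ ≤ f x} ≤ #{y ∈ B | θ ≤ g y}) :
    ∑ x ∈ A, f x ≤ ∑ y ∈ B, g y := by
  classical
  induction A using Finset.induction_on_max_value f generalizing B with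
  | empty => simpa using sum_nonneg hg
  | insert a A haA hmax ih =>
    by_cases hfa : f a ≤ 0
    · calc ∑ x ∈ insert a A, f x ≤ 0 :=
            sum_nonpos fun x hx => (mem_insert.1 hx).elim (· ▸ hfa) (hmax x · |>.trans hfa)
        _ ≤ ∑ y ∈ B, g y := sum_nonneg hg
    replace hfa := not_le.1 hfa
    obtain ⟨y, hyB, hay⟩ : ∃ y ∈ B, f a ≤ g y := by
      have ha : a ∈ {x ∈ insert a A | f a ≤ f x} := mem_filter.2 ⟨mem_insert_self a A, le_rfl⟩
      obtain ⟨y, hy⟩ := card_pos.1 ((card_pos.2 ⟨a, ha⟩).trans_le (h (f a) hfa))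
      exact ⟨y, mem_filter.1 hy⟩
    have hrest : ∀ θ, 0 < θ → #{x ∈ A | θ ≤ f x} ≤ #{z ∈ B.erase y | θ ≤ g z} := by
      intro θ hθ
      by_cases hθa : θ ≤ f a
      · have hcount := h θ hθ
        rw [filter_insert, if_pos hθa, card_insert_of_notMem fun h => haA (mem_filter.1 h).1]
          at hcount
        rw [filter_erase, card_erase_of_mem (mem_filter.2 ⟨hyB, hθa.trans hay⟩)]
        omega
      · rw [filter_false_of_mem fun x hx hθx => hθa (hθx.trans (hmax x hx)), card_empty]
        exact Nat.zero_le _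
    calc ∑ x ∈ insert a A, f x = f a + ∑ x ∈ A, f x := sum_insert haA
      _ ≤ g y + ∑ z ∈ B.erase y, g z :=
          add_le_add hay (ih (fun z hz => hg z (mem_of_mem_erase hz)) hrest)
      _ = ∑ z ∈ B, g z := add_sum_erase B g hyB

namespace FinMatroid

variable {E : Type*} [DecidableEq E] [Fintype E] (M : FinMatroid E)

theorem exists_indep_subset_union_card_le {A B : Finset E} (hA : M.Indep A) (hB : M.Indep B) :
    ∃ C, M.Indep C ∧ A ⊆ C ∧ C ⊆ A ∪ B ∧ #B ≤ #C := by
  obtain ⟨k, hk⟩ : ∃ k, #B ≤ #A + k := ⟨#B, Nat.le_add_left _ _⟩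
  induction k generalizing A with
  | zero => exact ⟨A, hA, subset_rfl, subset_union_left, hk⟩
  | succ k ih =>
    by_cases hBA : #B ≤ #A
    · exact ⟨A, hA, subset_rfl, subset_union_left, hBA⟩
    obtain ⟨x, hx, hxA⟩ := M.indep_exchange hA hB (not_le.1 hBA)
    obtain ⟨hxB, hxnA⟩ := mem_sdiff.1 hx
    obtain ⟨C, hC, hxAC, hCxAB, hBC⟩ :=
      ih hxA (by rw [card_insert_of_notMem hxnA]; omega)
    refine ⟨C, hC, (subset_insert x A).trans hxAC, hCxAB.trans ?_, hBC⟩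
    rw [insert_union, insert_eq_of_mem (mem_union_right A hxB)]

def IsMaxWeight (c : E → ℝ) (S : Finset E) : Prop :=
  M.Indep S ∧ ∀ S', M.Indep S' → ∑ t ∈ S', c t ≤ ∑ t ∈ S, c t

variable {M}

theorem IsMaxWeight.card_le_card_filter {c : E → ℝ} {S : Finset E} (hS : M.IsMaxWeight c S)
    {θ : ℝ} (hθ : 0 < θ) {X : Finset E} (hX : M.Indep X) (hXθ : ∀ x ∈ X, θ ≤ c x) :
    #X ≤ #{t ∈ S | θ ≤ c t} := by
  by_contra! hlt
  set A := {t ∈ S | θ ≤ c t}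
  obtain ⟨x, hx, hxA⟩ := M.indep_exchange (M.indep_subset hS.1 (filter_subset _ S)) hX hlt
  obtain ⟨hxX, hxnA⟩ := mem_sdiff.1 hx
  have hxS : x ∉ S := fun h => hxnA (mem_filter.2 ⟨h, hXθ x hxX⟩)
  obtain ⟨C, hC, hxAC, hCxAS, hSC⟩ := M.exists_indep_subset_union_card_le hxA hS.1
  have hxC : x ∈ C := hxAC (mem_insert_self x A)
  have hCS : C.erase x ⊆ S := fun t ht => by
    obtain ⟨htx, htC⟩ := mem_erase.1 ht
    rcases mem_union.1 (hCxAS htC) with h | h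
    · exact mem_filter.1 ((mem_insert.1 h).resolve_left htx) |>.1
    · exact h
  have hAC : A ⊆ C.erase x := fun t ht =>
    mem_erase.2 ⟨fun h => hxnA (h ▸ ht), hxAC (mem_insert_of_mem ht)⟩
  -- Passing from `S` to `C` trades at most one element, of weight `< θ`, for `x`.
  have hlost : ∑ t ∈ S \ C.erase x, c t < θ := by
    refine sum_lt_of_card_le_one ?_ hθ fun t ht => not_le.1 fun h => ?_
    · rw [card_sdiff_of_subset hCS, card_erase_of_mem hxC]
      omega
    · exact (mem_sdiff.1 ht).2 (hAC (mem_filter.2 ⟨(mem_sdiff.1 ht).1, h⟩))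
  have hsplit := sum_sdiff hCS (f := c)
  have hopt := hS.2 C hC
  rw [← insert_erase hxC, sum_insert (notMem_erase x C)] at hopt
  linarith [hXθ x hxX]

section Deviation

variable {ι : Type*} [DecidableEq ι] (player : E → ι) {b v : E → ℝ} {S : Finset E} {θ : ℝ}

def deviationBid (b v : E → ℝ) (i : ι) (t : E) : ℝ :=
  if player t = i then v t else b t

theorem card_filter_player_le (hS : M.IsMaxWeight b S) {i : ι} {D : Finset E}
    (hD : M.IsMaxWeight (deviationBid player b v i) D) (hθ : 0 < θ) {Y : Finset E}
    (hY : M.Indep (Y ∪ {t ∈ S | θ ≤ b t})) (hYS : Disjoint Y {t ∈ S | θ ≤ b t})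
    (hYv : ∀ t ∈ Y, θ ≤ v t) :
    #{t ∈ Y | player t = i} ≤
      #{t ∈ D | player t = i ∧ θ ≤ v t} + #{t ∈ {t ∈ S | θ ≤ b t} | player t = i} := by
  set B := {t ∈ S | θ ≤ b t}
  set X := {t ∈ Y | player t = i} ∪ {t ∈ B | player t ≠ i}
  have hX : M.Indep X :=
    M.indep_subset hY (union_subset_union (filter_subset _ Y) (filter_subset _ B))
  have hXθ : ∀ t ∈ X, θ ≤ deviationBid player b v i t := by
    intro t ht
    rcases mem_union.1 ht with h | h <;> obtain ⟨ht, hti⟩ := mem_filter.1 h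
    · rw [deviationBid, if_pos hti]
      exact hYv t ht
    · rw [deviationBid, if_neg hti]
      exact (mem_filter.1 ht).2
  have hXD := hD.card_le_card_filter hθ hX hXθ
  have hDsplit : #{t ∈ D | θ ≤ deviationBid player b v i t} =
      #{t ∈ D | player t = i ∧ θ ≤ v t} + #{t ∈ D | player t ≠ i ∧ θ ≤ b t} := by
    rw [← card_filter_add_card_filter_not (fun t => player t = i), filter_filter, filter_filter]
    congr 2 <;> ext t <;> by_cases h : player t = i <;> simp [deviationBid, h, and_comm]
  have hDB : #{t ∈ D | player t ≠ i ∧ θ ≤ b t} ≤ #B :=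
    hS.card_le_card_filter hθ (M.indep_subset hD.1 (filter_subset _ D))
      fun t ht => (mem_filter.1 ht).2.2
  have hXcard : #X = #{t ∈ Y | player t = i} + #{t ∈ B | player t ≠ i} :=
    card_union_of_disjoint (disjoint_filter_filter hYS)
  have hBcard : #{t ∈ B | player t = i} + #{t ∈ B | player t ≠ i} = #B :=
    card_filter_add_card_filter_not _
  omega

theorem card_le_sum_card_filter_add_two_mul [Fintype ι] (hS : M.IsMaxWeight b S)
    {Sdev : ι → Finset E} (hdev : ∀ i, M.IsMaxWeight (deviationBid player b v i) (Sdev i))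
    (hθ : 0 < θ) {X : Finset E} (hX : M.Indep X) (hXv : ∀ x ∈ X, θ ≤ v x) :
    #X ≤ ∑ i, #{t ∈ Sdev i | player t = i ∧ θ ≤ v t} + 2 * #{t ∈ S | θ ≤ b t} := by
  set B := {t ∈ S | θ ≤ b t}
  obtain ⟨C, hC, hBC, hCBX, hXC⟩ :=
    M.exists_indep_subset_union_card_le (M.indep_subset hS.1 (filter_subset _ S : B ⊆ S)) hX
  have hYv : ∀ t ∈ C \ B, θ ≤ v t := fun t ht =>
    hXv t ((mem_union.1 (hCBX (mem_sdiff.1 ht).1)).resolve_left (mem_sdiff.1 ht).2)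
  have hCB : M.Indep (C \ B ∪ B) := by rwa [sdiff_union_of_subset hBC]
  have hper i := card_filter_player_le player hS (hdev i) hθ hCB sdiff_disjoint hYv
  have hfiber (Z : Finset E) : #Z = ∑ i, #{t ∈ Z | player t = i} :=
    card_eq_sum_card_fiberwise fun t _ => mem_univ (player t)
  calc #X ≤ #C := hXC
    _ = #(C \ B) + #B := (card_sdiff_add_card_eq_card hBC).symm
    _ ≤ ∑ i, (#{t ∈ Sdev i | player t = i ∧ θ ≤ v t} + #{t ∈ B | player t = i}) + #B := by
        rw [hfiber (C \ B)]
        gcongr with i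
        exact hper i
    _ = _ := by rw [sum_add_distrib, ← hfiber B]; ring

end Deviation

end FinMatroid

theorem greedy_matroid_smooth_additive_general
    {E : Type*} [DecidableEq E] [Fintype E] (M : FinMatroid E)
    (n : ℕ) (player : E → Fin n)
    (w : E → ℝ) (hw : ∀ t, 0 ≤ w t)
    (Sstar : Finset E) (hSstar : M.Indep Sstar)
    (b : E → ℝ) (hb : ∀ t, 0 ≤ b t)
    (S : Finset E) (hS : M.Indep S)
    (hSOpt : ∀ S' : Finset E, M.Indep S' → ∑ t ∈ S', b t ≤ ∑ t ∈ S, b t)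
    (Sdev : Fin n → Finset E) (hSdev : ∀ i, M.Indep (Sdev i))
    (hSdevOpt : ∀ i, ∀ S' : Finset E, M.Indep S' →
      (∑ t ∈ S', if player t = i then (2/3) * w t else b t) ≤
        ∑ t ∈ Sdev i, if player t = i then (2/3) * w t else b t) :
    (∑ i : Fin n, ∑ t ∈ (Sdev i).filter (fun t => player t = i), (w t - (2/3) * w t)) ≥
      (1/3) * (∑ t ∈ Sstar, w t) - ∑ t ∈ S, b t := by
  set v : E → ℝ := fun t => 2 / 3 * w t
  have hdev i : M.IsMaxWeight (FinMatroid.deviationBid player b v i) (Sdev i) :=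
    ⟨hSdev i, hSdevOpt i⟩
  set won := univ.sigma fun i => {t ∈ Sdev i | player t = i}
  have hlayer : ∑ t ∈ Sstar, v t ≤ ∑ p ∈ won, v p.2 + 2 * ∑ t ∈ S, b t := by
    have := sum_le_sum_of_card_filter_le Sstar (B := won.disjSum (S.disjSum S))
      (f := v) (g := Sum.elim (fun p => v p.2) (Sum.elim b b)) ?_ fun θ hθ => ?_
    · simpa only [sum_disjSum, Sum.elim_inl, Sum.elim_inr, two_mul] using this
    · rintro (p | t | t) _
      exacts [mul_nonneg (by norm_num) (hw _), hb t, hb t]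
    · have := FinMatroid.card_le_sum_card_filter_add_two_mul player ⟨hS, hSOpt⟩ hdev hθ
        (M.indep_subset hSstar (filter_subset _ Sstar)) fun t ht => (mem_filter.1 ht).2
      simp only [card_filter, sum_disjSum, won, sum_sigma, sum_filter, ite_and, Sum.elim_inl,
        Sum.elim_inr, two_mul] at this ⊢
      exact this
  simp only [won, v, sum_sigma, ← mul_sum] at hlayer
  simp only [sum_sub_distrib, ← mul_sum]
  linarith

/-- **Smoothness of the greedy first-price matroid mechanism for additive valuations.**
The ground set is partitioned among `n` players via `player : E → Fin n`
(player `i` owns `E_i = player ⁻¹' {i}`).  Players have additive valuations given by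
nonnegative weights `w`.  `S*` is a welfare-optimal independent set; `b` is any
(nonnegative) bid profile and `S` a max-weight independent set for `b`
(the greedy outcome); `S^i` is the greedy outcome when player `i` unilaterally
deviates to bidding `(2/3)·w_t` on each of her elements.  Then
`Σ_i Σ_{t ∈ S^i ∩ E_i} (w_t − (2/3)·w_t) ≥ (1/3)·Σ_{t∈S*} w_t − Σ_{t∈S} b_t`,
i.e. the mechanism is `(1/3, 1)`-smooth. -/
theorem greedy_matroid_smooth_additive
    {E : Type*} [DecidableEq E] [Fintype E] (M : FinMatroid E)
    (n : ℕ) (player : E → Fin n)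
    (w : E → ℝ) (hw : ∀ t, 0 ≤ w t)
    (Sstar : Finset E) (hSstar : M.Indep Sstar)
    (hSstarOpt : ∀ S : Finset E, M.Indep S → ∑ t ∈ S, w t ≤ ∑ t ∈ Sstar, w t)
    (b : E → ℝ) (hb : ∀ t, 0 ≤ b t)
    (S : Finset E) (hS : M.Indep S)
    (hSOpt : ∀ S' : Finset E, M.Indep S' → ∑ t ∈ S', b t ≤ ∑ t ∈ S, b t)
    (Sdev : Fin n → Finset E) (hSdev : ∀ i, M.Indep (Sdev i))
    (hSdevOpt : ∀ i, ∀ S' : Finset E, M.Indep S' →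
      (∑ t ∈ S', if player t = i then (2/3) * w t else b t) ≤
        ∑ t ∈ Sdev i, if player t = i then (2/3) * w t else b t) :
    (∑ i : Fin n, ∑ t ∈ (Sdev i).filter (fun t => player t = i), (w t - (2/3) * w t)) ≥
      (1/3) * (∑ t ∈ Sstar, w t) - ∑ t ∈ S, b t :=
  greedy_matroid_smooth_additive_general M n player w hw Sstar hSstar b hb S hS hSOpt Sdev hSdev
    hSdevOpt
end

section
/- Let M = (E, I) be a matroid whose ground set is partitioned among n players, and let each player i have an XOS valuation v_i : 2^{E_i} → ℝ≥0. Then there exist deviation bid profiles b*_i : E_i → ℝ≥0 (depending only on the valuation profile v) such that for every bid profile b : E → ℝ≥0, every S ∈ I maximizing Σ_{t∈S} b_t over I, and, for each i, every S^i ∈ I maximizing total weight under the profile that equals b*_i on E_i and b on E ∖ E_i, the following holds: Σ_{i=1}^n [ v_i(S^i ∩ E_i) − Σ_{t ∈ S^i ∩ E_i} b*_i(t) ] ≥ (1/3)·OPT(v) − Σ_{t∈S} b_t. (That is, the greedy first-price matroid mechanism is (1/3,1)-smooth for XOS valuations.) -/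
/-- `v` is an XOS (fractionally subadditive) valuation: a pointwise maximum of a
finite nonempty family of additive valuations with nonnegative weights. -/
def IsXOS {E : Type*} [DecidableEq E] (v : Finset E → ℝ) : Prop :=
  ∃ L : Finset (E → ℝ), L.Nonempty ∧ (∀ w ∈ L, ∀ t, 0 ≤ w t) ∧
    ∀ X : Finset E, (∃ w ∈ L, v X = ∑ t ∈ X, w t) ∧ (∀ w ∈ L, ∑ t ∈ X, w t ≤ v X)

namespace FinMatroid

open Finset

variable {E : Type*} [DecidableEq E] [Fintype E] (M : FinMatroid E)

open scoped Classical in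
noncomputable def rk (A : Finset E) : ℕ :=
  (A.powerset.filter (fun B => M.Indep B)).sup Finset.card

lemma card_le_rk {A B : Finset E} (hBA : B ⊆ A) (hB : M.Indep B) : B.card ≤ M.rk A := by
  classical
  exact Finset.le_sup (by simp [Finset.mem_filter, Finset.mem_powerset, hBA, hB])

lemma exists_indep_card_eq_rk (A : Finset E) :
    ∃ B, B ⊆ A ∧ M.Indep B ∧ B.card = M.rk A := by
  classical
  have hne : (A.powerset.filter (fun B => M.Indep B)).Nonempty :=
    ⟨∅, by simp [M.empty_indep]⟩
  obtain ⟨B, hB, hBe⟩ := Finset.exists_mem_eq_sup _ hne Finset.card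
  simp only [mem_filter, mem_powerset] at hB
  exact ⟨B, hB.1, hB.2, hBe.symm⟩

lemma rk_mono {A B : Finset E} (h : A ⊆ B) : M.rk A ≤ M.rk B := by
  obtain ⟨C, hCA, hCi, hCc⟩ := M.exists_indep_card_eq_rk A
  rw [← hCc]
  exact M.card_le_rk (hCA.trans h) hCi

lemma rk_le_card (A : Finset E) : M.rk A ≤ A.card := by
  obtain ⟨C, hCA, hCi, hCc⟩ := M.exists_indep_card_eq_rk A
  rw [← hCc]
  exact Finset.card_le_card hCA

lemma rk_indep {A : Finset E} (h : M.Indep A) : M.rk A = A.card :=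
  le_antisymm (M.rk_le_card A) (M.card_le_rk subset_rfl h)

lemma indep_of_rk_eq_card {A : Finset E} (h : M.rk A = A.card) : M.Indep A := by
  obtain ⟨B, hBA, hBi, hBc⟩ := M.exists_indep_card_eq_rk A
  have : B = A := Finset.eq_of_subset_of_card_le hBA (by omega)
  rw [← this]; exact hBi

lemma exists_extend {A I : Finset E} (hIA : I ⊆ A) (hI : M.Indep I) :
    ∃ J, I ⊆ J ∧ J ⊆ A ∧ M.Indep J ∧ J.card = M.rk A := by
  classical
  obtain ⟨B, hBA, hBind, hBcard⟩ := M.exists_indep_card_eq_rk A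
  have H : ∀ m : ℕ, ∀ I : Finset E, I ⊆ A → M.Indep I → M.rk A - I.card = m →
      ∃ J, I ⊆ J ∧ J ⊆ A ∧ M.Indep J ∧ J.card = M.rk A := by
    intro m
    induction m with
    | zero =>
      intro I hIA hI hm
      have h1 : I.card ≤ M.rk A := M.card_le_rk hIA hI
      exact ⟨I, subset_rfl, hIA, hI, by omega⟩
    | succ k ih =>
      intro I hIA hI hm
      have h1 : I.card < B.card := by
        have := M.card_le_rk hIA hI
        omega
      obtain ⟨x, hx, hxi⟩ := M.indep_exchange hI hBind h1
      rw [mem_sdiff] at hx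
      have hxI : x ∉ I := hx.2
      have hins : insert x I ⊆ A := insert_subset (hBA hx.1) hIA
      have hcard : (insert x I).card = I.card + 1 := card_insert_of_notMem hxI
      obtain ⟨J, hJ1, hJ2, hJ3, hJ4⟩ := ih (insert x I) hins hxi (by omega)
      exact ⟨J, (subset_insert x I).trans hJ1, hJ2, hJ3, hJ4⟩
  exact H (M.rk A - I.card) I hIA hI rfl

def Spanned (A : Finset E) (t : E) : Prop := M.rk (insert t A) = M.rk A

lemma spanned_of_mem {A : Finset E} {t : E} (h : t ∈ A) : M.Spanned A t := by
  unfold Spanned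
  rw [Finset.insert_eq_self.2 h]

lemma rk_insert_le (A : Finset E) (t : E) : M.rk (insert t A) ≤ M.rk A + 1 := by
  obtain ⟨B, hB, hBi, hBc⟩ := M.exists_indep_card_eq_rk (insert t A)
  rw [← hBc]
  have h1 : B.erase t ⊆ A := by
    intro x hx
    rw [mem_erase] at hx
    rcases mem_insert.1 (hB hx.2) with h | h
    · exact absurd h hx.1
    · exact h
  have h2 : (B.erase t).card ≤ M.rk A :=
    M.card_le_rk h1 (M.indep_subset hBi (erase_subset _ _))
  by_cases ht : t ∈ B
  · have := Finset.card_erase_of_mem ht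
    omega
  · rw [Finset.erase_eq_of_notMem ht] at h2
    omega

lemma spanned_mono {H B : Finset E} {t : E} (hHB : H ⊆ B) (h : M.Spanned H t) :
    M.Spanned B t := by
  classical
  by_cases htB : t ∈ B
  · exact M.spanned_of_mem htB
  by_cases htH : t ∈ H
  · exact absurd (hHB htH) htB
  refine le_antisymm ?_ (M.rk_mono (subset_insert _ _))
  by_contra hlt
  push_neg at hlt
  have hins : M.rk (insert t B) = M.rk B + 1 := by
    have := M.rk_insert_le B t
    omega
  obtain ⟨IH, hIHH, hIHi, hIHc⟩ := M.exists_indep_card_eq_rk H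
  obtain ⟨I, hIHsub, hIB, hIi, hIc⟩ := M.exists_extend (hIHH.trans hHB) hIHi
  obtain ⟨I', hII', hI'sub, hI'i, hI'c⟩ :=
    M.exists_extend (A := insert t B) (hIB.trans (subset_insert _ _)) hIi
  have h1 : I'.erase t ⊆ B := by
    intro x hx
    rw [mem_erase] at hx
    rcases mem_insert.1 (hI'sub hx.2) with h' | h'
    · exact absurd h' hx.1
    · exact h'
  have h2 : (I'.erase t).card ≤ I.card := by
    rw [hIc]
    exact M.card_le_rk h1 (M.indep_subset hI'i (erase_subset _ _))
  have htI' : t ∈ I' := by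
    by_contra ht
    rw [Finset.erase_eq_of_notMem ht] at h2
    omega
  have htI : t ∉ I := fun hh => htB (hIB hh)
  have h3 : I ⊆ I'.erase t := Finset.subset_erase.2 ⟨hII', htI⟩
  have h4 : I = I'.erase t := Finset.eq_of_subset_of_card_le h3 h2
  have h5 : insert t I = I' := by rw [h4, Finset.insert_erase htI']
  have h6 : M.Indep (insert t IH) :=
    M.indep_subset hI'i (by rw [← h5]; exact insert_subset_insert _ hIHsub)
  have htIH : t ∉ IH := fun hh => htH (hIHH hh)
  have h7 : (insert t IH).card ≤ M.rk (insert t H) :=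
    M.card_le_rk (insert_subset_insert _ hIHH) h6
  rw [card_insert_of_notMem htIH] at h7
  rw [h] at h7
  omega

lemma card_le_rk_of_spanned {Y A : Finset E} (hY : M.Indep Y)
    (h : ∀ t ∈ Y, M.Spanned A t) : Y.card ≤ M.rk A := by
  obtain ⟨I, hIA, hIi, hIc⟩ := M.exists_indep_card_eq_rk A
  rw [← hIc]
  by_contra hlt
  push_neg at hlt
  obtain ⟨x, hx, hxi⟩ := M.indep_exchange hIi hY hlt
  rw [mem_sdiff] at hx
  have h1 : (insert x I).card ≤ M.rk (insert x A) :=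
    M.card_le_rk (insert_subset_insert _ hIA) hxi
  rw [card_insert_of_notMem hx.2, h x hx.1, hIc] at h1
  omega

lemma rk_union_le (A B : Finset E) : M.rk (A ∪ B) ≤ M.rk A + B.card := by
  classical
  obtain ⟨J, hJ, hJi, hJc⟩ := M.exists_indep_card_eq_rk (A ∪ B)
  rw [← hJc]
  have h1 : J \ B ⊆ A := by
    intro x hx
    rw [mem_sdiff] at hx
    rcases mem_union.1 (hJ hx.1) with h' | h'
    · exact h'
    · exact absurd h' hx.2
  have h2 : (J \ B).card ≤ M.rk A := M.card_le_rk h1 (M.indep_subset hJi (sdiff_subset))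
  have h3 : (J ∩ B).card ≤ B.card := Finset.card_le_card inter_subset_right
  have h4 : (J \ B).card + (J ∩ B).card = J.card := Finset.card_sdiff_add_card_inter J B
  omega

lemma swap_bound {c : E → ℝ} {S : Finset E} (hS : M.Indep S)
    (hmax : ∀ S', M.Indep S' → ∑ t ∈ S', c t ≤ ∑ t ∈ S, c t)
    {t : E} (ht : t ∉ S) (hct : 0 < c t) {I : Finset E} (hIS : I ⊆ S)
    (hins : M.Indep (insert t I)) :
    ∃ s ∈ S, s ∉ I ∧ c t ≤ c s := by
  classical
  have htI : t ∉ I := fun h => ht (hIS h)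
  obtain ⟨J, hJ1, hJ2, hJi, hJc⟩ :=
    M.exists_extend (A := insert t S) (insert_subset_insert _ hIS) hins
  have htJ : t ∈ J := hJ1 (mem_insert_self _ _)
  have hIJ : I ⊆ J := (subset_insert _ _).trans hJ1
  have hSrk : M.rk S = S.card := M.rk_indep hS
  have hlow : S.card ≤ J.card := by
    rw [hJc]
    have := M.rk_mono (subset_insert t S)
    omega
  have hup : J.card ≤ S.card + 1 := by
    rw [hJc]
    have h1 := M.rk_le_card (insert t S)
    have h2 := Finset.card_insert_of_notMem ht
    omega
  by_cases hcase : J.card = S.card + 1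
  · have hJeq : J = insert t S := by
      apply Finset.eq_of_subset_of_card_le hJ2
      rw [Finset.card_insert_of_notMem ht, hcase]
    have h1 := hmax J hJi
    rw [hJeq, Finset.sum_insert ht] at h1
    linarith
  · have hJcard : J.card = S.card := by omega
    set K := J.erase t with hK
    have hKS : K ⊆ S := by
      intro x hx
      rw [hK, mem_erase] at hx
      rcases mem_insert.1 (hJ2 hx.2) with h' | h'
      · exact absurd h' hx.1
      · exact h'
    have hKcard : K.card + 1 = S.card := by
      rw [hK, Finset.card_erase_of_mem htJ]
      have hJpos : 0 < J.card := Finset.card_pos.2 ⟨t, htJ⟩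
      omega
    have hsd : (S \ K).card = 1 := by
      rw [Finset.card_sdiff_of_subset hKS]
      omega
    obtain ⟨s, hs⟩ := Finset.card_eq_one.1 hsd
    have hsS : s ∈ S ∧ s ∉ K := by
      have : s ∈ S \ K := by rw [hs]; exact mem_singleton_self s
      rw [mem_sdiff] at this
      exact this
    have hIK : I ⊆ K := Finset.subset_erase.2 ⟨hIJ, htI⟩
    have hsum1 : c t + ∑ x ∈ K, c x = ∑ x ∈ J, c x := Finset.add_sum_erase J c htJ
    have hsum2 : ∑ x ∈ S \ K, c x + ∑ x ∈ K, c x = ∑ x ∈ S, c x := Finset.sum_sdiff hKS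
    have hsum3 : ∑ x ∈ S \ K, c x = c s := by rw [hs, Finset.sum_singleton]
    have h1 := hmax J hJi
    refine ⟨s, hsS.1, fun h => hsS.2 (hIK h), by linarith⟩

lemma spanned_filter_of_max {c : E → ℝ} {Sd : Finset E} (hSd : M.Indep Sd)
    (hmax : ∀ S', M.Indep S' → ∑ t ∈ S', c t ≤ ∑ t ∈ Sd, c t)
    {t : E} (ht : t ∉ Sd) (hct : 0 < c t) :
    M.Spanned (Sd.filter (fun s => c t ≤ c s)) t := by
  classical
  set H := Sd.filter (fun s => c t ≤ c s) with hH
  by_contra hns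
  have hHi : M.Indep H := M.indep_subset hSd (filter_subset _ _)
  have hHrk : M.rk H = H.card := M.rk_indep hHi
  have htH : t ∉ H := fun h => ht (filter_subset _ _ h)
  have h1 : M.rk (insert t H) = H.card + 1 := by
    have h2 := M.rk_insert_le H t
    have h3 := M.rk_mono (subset_insert t H)
    unfold Spanned at hns
    omega
  have hins : M.Indep (insert t H) := by
    apply M.indep_of_rk_eq_card
    rw [h1, Finset.card_insert_of_notMem htH]
  obtain ⟨s, hsS, hsH, hcs⟩ := M.swap_bound hSd hmax ht hct (filter_subset _ _) hins
  exact hsH (mem_filter.2 ⟨hsS, hcs⟩)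

lemma rk_filter_le_card {c : E → ℝ} {S : Finset E} (hS : M.Indep S)
    (hmax : ∀ S', M.Indep S' → ∑ t ∈ S', c t ≤ ∑ t ∈ S, c t)
    {x : ℝ} (hx : 0 ≤ x) :
    M.rk (Finset.univ.filter (fun s => x < c s)) ≤ (S.filter (fun s => x < c s)).card := by
  classical
  by_contra h
  push_neg at h
  obtain ⟨B, hBA, hBi, hBc⟩ := M.exists_indep_card_eq_rk (Finset.univ.filter (fun s => x < c s))
  set Sx := S.filter (fun s => x < c s) with hSx
  have hSxi : M.Indep Sx := M.indep_subset hS (filter_subset _ _)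
  obtain ⟨u, hu, hui⟩ := M.indep_exchange hSxi hBi (by rw [hBc]; exact h)
  rw [mem_sdiff] at hu
  have hxcu : x < c u := (mem_filter.1 (hBA hu.1)).2
  have hcu : 0 < c u := lt_of_le_of_lt hx hxcu
  have huS : u ∉ S := by
    intro hh
    exact hu.2 (mem_filter.2 ⟨hh, hxcu⟩)
  obtain ⟨s, hsS, hsSx, hcs⟩ := M.swap_bound hS hmax huS hcu (filter_subset _ _) hui
  exact hsSx (mem_filter.2 ⟨hsS, lt_of_lt_of_le hxcu hcs⟩)

lemma sum_le_sum_of_card_filter_le {α : Type*} [DecidableEq α] :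
    ∀ (m : ℕ) (T U : Finset α) (f g : α → ℝ), T.card = m →
    (∀ t ∈ T, 0 ≤ f t) → (∀ u ∈ U, 0 ≤ g u) →
    (∀ x : ℝ, 0 ≤ x → (T.filter (fun t => x < f t)).card ≤ (U.filter (fun u => x < g u)).card) →
    ∑ t ∈ T, f t ≤ ∑ u ∈ U, g u := by
  intro m
  induction m with
  | zero =>
    intro T U f g hT hf hg h
    rw [Finset.card_eq_zero.1 hT, Finset.sum_empty]
    exact Finset.sum_nonneg hg
  | succ k ih =>
    intro T U f g hT hf hg h
    have hTne : T.Nonempty := by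
      rw [← Finset.card_pos]; omega
    obtain ⟨t₀, ht₀T, ht₀max⟩ := Finset.exists_max_image T f hTne
    by_cases hpos : 0 < f t₀
    · have hUx : ∀ x : ℝ, 0 ≤ x → x < f t₀ → ((U.filter (fun u => x < g u)).card ≥ 1) := by
        intro x hx hxf
        have := h x hx
        have h1 : t₀ ∈ T.filter (fun t => x < f t) := mem_filter.2 ⟨ht₀T, hxf⟩
        have h2 : 1 ≤ (T.filter (fun t => x < f t)).card := Finset.card_pos.2 ⟨t₀, h1⟩
        omega
      have hUne : U.Nonempty := by
        have := hUx 0 le_rfl hpos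
        rw [ge_iff_le, Finset.one_le_card] at this
        obtain ⟨u, hu⟩ := this
        exact ⟨u, filter_subset _ _ hu⟩
      obtain ⟨u₀, hu₀U, hu₀max⟩ := Finset.exists_max_image U g hUne
      have hgu₀ : f t₀ ≤ g u₀ := by
        by_contra hlt
        push_neg at hlt
        have hx0 : (0:ℝ) ≤ g u₀ := hg u₀ hu₀U
        have := hUx (g u₀) hx0 hlt
        have hempty : U.filter (fun u => g u₀ < g u) = ∅ := by
          apply Finset.filter_false_of_mem
          intro u hu
          exact not_lt.2 (hu₀max u hu)
        rw [hempty] at this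
        simp at this
      have hh' : ∀ x : ℝ, 0 ≤ x →
          ((T.erase t₀).filter (fun t => x < f t)).card ≤
            ((U.erase u₀).filter (fun u => x < g u)).card := by
        intro x hx
        rw [Finset.filter_erase, Finset.filter_erase]
        by_cases hxt : x < f t₀
        · have h1 : t₀ ∈ T.filter (fun t => x < f t) := mem_filter.2 ⟨ht₀T, hxt⟩
          have h2 : u₀ ∈ U.filter (fun u => x < g u) :=
            mem_filter.2 ⟨hu₀U, lt_of_lt_of_le hxt hgu₀⟩
          rw [Finset.card_erase_of_mem h1, Finset.card_erase_of_mem h2]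
          exact Nat.sub_le_sub_right (h x hx) 1
        · have hempty : (T.filter (fun t => x < f t)) = ∅ := by
            apply Finset.filter_false_of_mem
            intro u hu
            push_neg at hxt
            exact not_lt.2 (le_trans (ht₀max u hu) hxt)
          rw [hempty]
          simp
      have hrec := ih (T.erase t₀) (U.erase u₀) f g
        (by rw [Finset.card_erase_of_mem ht₀T]; omega)
        (fun t htm => hf t (Finset.erase_subset _ _ htm))
        (fun u hum => hg u (Finset.erase_subset _ _ hum))
        hh'
      have e1 : f t₀ + ∑ t ∈ T.erase t₀, f t = ∑ t ∈ T, f t := Finset.add_sum_erase T f ht₀T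
      have e2 : g u₀ + ∑ u ∈ U.erase u₀, g u = ∑ u ∈ U, g u := Finset.add_sum_erase U g hu₀U
      linarith
    · push_neg at hpos
      have hz : ∑ t ∈ T, f t ≤ 0 := by
        apply Finset.sum_nonpos
        intro t htm
        exact le_trans (ht₀max t htm) hpos
      exact le_trans hz (Finset.sum_nonneg hg)

end FinMatroid

open Finset


/-- **Smoothness of the greedy first-price matroid mechanism for XOS valuations.**
The ground set of the matroid is partitioned among `n` players via `player : E → Fin n`,
and each player `i` has an XOS valuation `v i` (applied to her allocated set `S ∩ E_i`,
written as a filter).  `Sopt` is a welfare-optimal independent set, so that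
`OPT(v) = Σ_i v_i(Sopt ∩ E_i)`.  There exist deviation bids `bstar i` (depending only
on the valuations) such that for every nonnegative bid profile `b`, every max-weight
independent set `S` for `b` (the greedy outcome) and, for each `i`, every max-weight
independent set `Sdev i` for the profile where `i` deviates to `bstar i`:
`Σ_i [v_i(Sdev i ∩ E_i) − Σ_{t ∈ Sdev i ∩ E_i} bstar i t] ≥ (1/3)·OPT(v) − Σ_{t∈S} b_t`,
i.e. the mechanism is `(1/3, 1)`-smooth. -/
theorem greedy_matroid_smooth_xos
    {E : Type*} [DecidableEq E] [Fintype E] (M : FinMatroid E)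
    (n : ℕ) (player : E → Fin n)
    (v : Fin n → Finset E → ℝ) (hv : ∀ i, IsXOS (v i))
    (Sopt : Finset E) (hSopt : M.Indep Sopt)
    (hSoptOpt : ∀ S : Finset E, M.Indep S →
      (∑ i : Fin n, v i (S.filter (fun t => player t = i))) ≤
        ∑ i : Fin n, v i (Sopt.filter (fun t => player t = i))) :
    ∃ bstar : Fin n → E → ℝ, (∀ i t, 0 ≤ bstar i t) ∧
      ∀ b : E → ℝ, (∀ t, 0 ≤ b t) →
      ∀ S : Finset E, M.Indep S →
        (∀ S' : Finset E, M.Indep S' → ∑ t ∈ S', b t ≤ ∑ t ∈ S, b t) →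
      ∀ Sdev : Fin n → Finset E,
        (∀ i, M.Indep (Sdev i) ∧
          ∀ S' : Finset E, M.Indep S' →
            (∑ t ∈ S', if player t = i then bstar i t else b t) ≤
              ∑ t ∈ Sdev i, if player t = i then bstar i t else b t) →
        (∑ i : Fin n, (v i ((Sdev i).filter (fun t => player t = i)) -
            ∑ t ∈ (Sdev i).filter (fun t => player t = i), bstar i t)) ≥
          (1/3) * (∑ i : Fin n, v i (Sopt.filter (fun t => player t = i))) -
            ∑ t ∈ S, b t := by
  classical
  have hch : ∀ i : Fin n, ∃ w : E → ℝ, (∀ t, 0 ≤ w t) ∧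
      (v i (Sopt.filter (fun t => player t = i)) =
        ∑ t ∈ Sopt.filter (fun t => player t = i), w t) ∧
      (∀ X : Finset E, ∑ t ∈ X, w t ≤ v i X) := by
    intro i
    obtain ⟨L, hLne, hLnn, hLprop⟩ := hv i
    obtain ⟨w, hwL, hweq⟩ := (hLprop (Sopt.filter (fun t => player t = i))).1
    exact ⟨w, hLnn w hwL, hweq, fun X => (hLprop X).2 w hwL⟩
  choose w hwnn hweq hwle using hch
  set bstar : Fin n → E → ℝ :=
    fun i t => if player t = i ∧ t ∈ Sopt then w i t / 2 else 0 with hbstardef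
  have hbstarnn : ∀ i t, 0 ≤ bstar i t := by
    intro i t
    rw [hbstardef]
    dsimp only
    split_ifs
    · exact div_nonneg (hwnn i t) (by norm_num)
    · exact le_rfl
  have hbstar_eq : ∀ i t, player t = i → t ∈ Sopt → bstar i t = w i t / 2 := by
    intro i t h1 h2
    rw [hbstardef]
    dsimp only
    rw [if_pos ⟨h1, h2⟩]
  have hbstar_pos_mem : ∀ i t, 0 < bstar i t → player t = i ∧ t ∈ Sopt := by
    intro i t hpos
    by_contra hc
    rw [hbstardef] at hpos
    dsimp only at hpos
    rw [if_neg hc] at hpos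
    exact lt_irrefl _ hpos
  refine ⟨bstar, hbstarnn, ?_⟩
  intro b hb S hS hSmax Sdev hSdev
  set Rej : Finset E := Sopt.filter (fun t => t ∉ Sdev (player t)) with hRejdef
  have key : ∑ t ∈ Rej, bstar (player t) t ≤ ∑ t ∈ S, b t := by
    apply FinMatroid.sum_le_sum_of_card_filter_le Rej.card Rej S
      (fun t => bstar (player t) t) b rfl
    · intro t _
      exact hbstarnn _ t
    · intro u _
      exact hb u
    · intro x hx
      show (Rej.filter (fun t => x < bstar (player t) t)).card ≤
        (S.filter (fun u => x < b u)).card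
      set Axx := Finset.univ.filter (fun s => x < b s) with hAxx
      set Own := Sopt.filter (fun t => t ∈ Sdev (player t) ∧ x < bstar (player t) t) with hOwn
      set RejF := Rej.filter (fun t => x < bstar (player t) t) with hRejF
      have hsub : ∀ t ∈ RejF, M.Spanned (Own ∪ Axx) t := by
        intro t htm
        rw [hRejF, mem_filter, hRejdef, mem_filter] at htm
        obtain ⟨⟨htSopt, htnd⟩, htx⟩ := htm
        have hct0 : (0:ℝ) < bstar (player t) t := lt_of_le_of_lt hx htx
        have hct : 0 < (if player t = player t then bstar (player t) t else b t) := by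
          rw [if_pos rfl]
          exact hct0
        have hsp := M.spanned_filter_of_max (hSdev (player t)).1 (hSdev (player t)).2 htnd hct
        refine M.spanned_mono ?_ hsp
        intro s hs
        rw [mem_filter] at hs
        obtain ⟨hsSdev, hcs⟩ := hs
        rw [if_pos rfl] at hcs
        by_cases hps : player s = player t
        · rw [if_pos hps] at hcs
          have hspos : 0 < bstar (player t) s := lt_of_lt_of_le hct0 hcs
          obtain ⟨hps', hsSopt⟩ := hbstar_pos_mem (player t) s hspos
          refine mem_union_left _ ?_
          rw [hOwn, mem_filter]
          refine ⟨hsSopt, ?_, ?_⟩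
          · rw [hps']
            exact hsSdev
          · rw [hps']
            exact lt_of_lt_of_le htx hcs
        · rw [if_neg hps] at hcs
          exact mem_union_right _ (mem_filter.2 ⟨mem_univ s, lt_of_lt_of_le htx hcs⟩)
      have hdisj : Disjoint Own RejF := by
        rw [Finset.disjoint_left]
        intro a haO haR
        rw [hOwn, mem_filter] at haO
        rw [hRejF, mem_filter, hRejdef, mem_filter] at haR
        exact haR.1.2 haO.2.1
      have hPsub : Own ∪ RejF ⊆ Sopt := by
        apply Finset.union_subset
        · rw [hOwn]
          exact filter_subset _ _
        · rw [hRejF, hRejdef]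
          exact (filter_subset _ _).trans (filter_subset _ _)
      have hPind : M.Indep (Own ∪ RejF) := M.indep_subset hSopt hPsub
      have hspanall : ∀ t ∈ Own ∪ RejF, M.Spanned (Own ∪ Axx) t := by
        intro t htm
        rcases mem_union.1 htm with h' | h'
        · exact M.spanned_of_mem (mem_union_left _ h')
        · exact hsub t h'
      have hcount := M.card_le_rk_of_spanned hPind hspanall
      have h4 : M.rk (Own ∪ Axx) ≤ M.rk Axx + Own.card := by
        rw [Finset.union_comm]
        exact M.rk_union_le Axx Own
      have h5 : M.rk Axx ≤ (S.filter (fun s => x < b s)).card :=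
        M.rk_filter_le_card hS hSmax hx
      have hcards : (Own ∪ RejF).card = Own.card + RejF.card :=
        Finset.card_union_of_disjoint hdisj
      omega
  have hper : ∀ i : Fin n,
      (1/2) * v i (Sopt.filter (fun t => player t = i)) -
        ∑ t ∈ Rej.filter (fun t => player t = i), bstar (player t) t ≤
      v i ((Sdev i).filter (fun t => player t = i)) -
        ∑ t ∈ (Sdev i).filter (fun t => player t = i), bstar i t := by
    intro i
    set Ai := (Sdev i).filter (fun t => player t = i) with hAi
    set Xi := Sopt.filter (fun t => player t = i) with hXi
    set Ki := Xi.filter (fun t => t ∈ Sdev i) with hKi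
    set Ri := Xi.filter (fun t => t ∉ Sdev i) with hRi
    have e1 : ∑ t ∈ Ai, bstar i t = ∑ t ∈ Ki, (w i t / 2) := by
      have step1 : ∑ t ∈ Ai, bstar i t = ∑ t ∈ Ai, (if t ∈ Sopt then w i t / 2 else 0) := by
        apply Finset.sum_congr rfl
        intro t htm
        rw [hAi, mem_filter] at htm
        rw [hbstardef]
        dsimp only
        by_cases hts : t ∈ Sopt
        · rw [if_pos ⟨htm.2, hts⟩, if_pos hts]
        · rw [if_neg (fun hcc => hts hcc.2), if_neg hts]
      rw [step1, Finset.sum_ite_mem]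
      apply Finset.sum_congr _ (fun _ _ => rfl)
      rw [hAi, hKi, hXi]
      ext a
      simp only [mem_inter, mem_filter]
      tauto
    have e2 : ∑ t ∈ Ki, w i t ≤ ∑ t ∈ Ai, w i t := by
      apply Finset.sum_le_sum_of_subset_of_nonneg
      · intro a ha
        rw [hKi, mem_filter, hXi, mem_filter] at ha
        rw [hAi, mem_filter]
        exact ⟨ha.2, ha.1.2⟩
      · intro t _ _
        exact hwnn i t
    have e3 : ∑ t ∈ Ai, w i t ≤ v i Ai := hwle i Ai
    have e4 : v i Xi = ∑ t ∈ Ki, w i t + ∑ t ∈ Ri, w i t := by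
      rw [hweq i]
      exact (Finset.sum_filter_add_sum_filter_not Xi (fun t => t ∈ Sdev i) (w i)).symm
    have e5 : Rej.filter (fun t => player t = i) = Ri := by
      rw [hRejdef, hRi, hXi]
      ext a
      simp only [mem_filter]
      constructor
      · rintro ⟨⟨h1, h2⟩, h3⟩
        exact ⟨⟨h1, h3⟩, by rwa [h3] at h2⟩
      · rintro ⟨⟨h1, h3⟩, h2⟩
        refine ⟨⟨h1, ?_⟩, h3⟩
        rwa [h3]
    have e6 : ∑ t ∈ Ri, bstar (player t) t = ∑ t ∈ Ri, w i t / 2 := by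
      apply Finset.sum_congr rfl
      intro t htm
      rw [hRi, mem_filter, hXi, mem_filter] at htm
      rw [htm.1.2, hbstar_eq i t htm.1.2 htm.1.1]
    rw [e5, e6, e1, ← Finset.sum_div, ← Finset.sum_div]
    linarith [e2, e3, e4]
  have hsum := Finset.sum_le_sum (fun i (_ : i ∈ Finset.univ) => hper i)
  have hfib : ∑ i : Fin n, ∑ t ∈ Rej.filter (fun t => player t = i), bstar (player t) t
      = ∑ t ∈ Rej, bstar (player t) t :=
    Finset.sum_fiberwise Rej player (fun t => bstar (player t) t)
  have hOPTnn : 0 ≤ ∑ i : Fin n, v i (Sopt.filter (fun t => player t = i)) := by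
    apply Finset.sum_nonneg
    intro i _
    rw [hweq i]
    exact Finset.sum_nonneg (fun t _ => hwnn i t)
  rw [ge_iff_le]
  have hsplit : ∑ i : Fin n, ((1/2) * v i (Sopt.filter (fun t => player t = i)) -
        ∑ t ∈ Rej.filter (fun t => player t = i), bstar (player t) t)
      = (1/2) * (∑ i : Fin n, v i (Sopt.filter (fun t => player t = i))) -
        ∑ t ∈ Rej, bstar (player t) t := by
    rw [Finset.sum_sub_distrib, ← Finset.mul_sum, hfib]
  linarith [hsum, key, hOPTnn, hsplit]
end

section
/- Suppose a deterministic mechanism is (λ, μ)-smooth for the valuation class V_1 × … × V_n, and assume that OPT(v) is attained for every valuation profile considered. For each i, let max-V_i be the class of valuations v_i : X_i → ℝ≥0 of the form v_i(x) = max_{ℓ∈L} v^ℓ_i(x) for some finite nonempty index set L and valuations v^ℓ_i ∈ V_i. Then the same mechanism is (λ, μ)-smooth for the class max-V_1 × … × max-V_n. -/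
/-- A deterministic mechanism for `n` players: action sets `A i`, allocation sets
`X i`, a nonempty set of feasible allocation profiles, an allocation rule mapping
action profiles to feasible allocation profiles, and nonnegative payment rules. -/
structure Mechanism (n : ℕ) (A : Fin n → Type*) (X : Fin n → Type*) where
  feasible : Set (∀ i, X i)
  feasible_nonempty : feasible.Nonempty
  alloc : (∀ i, A i) → ∀ i, X i
  alloc_feasible : ∀ a, alloc a ∈ feasible
  pay : (∀ i, A i) → Fin n → ℝ
  pay_nonneg : ∀ a i, 0 ≤ pay a i

/-- Player `i`'s quasilinear utility at action profile `a` under valuation `v i`. -/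
def Mechanism.util {n : ℕ} {A X : Fin n → Type*} (M : Mechanism n A X)
    (v : ∀ i, X i → ℝ) (a : ∀ i, A i) (i : Fin n) : ℝ :=
  v i (M.alloc a i) - M.pay a i

/-- The optimal welfare `OPT(v) = sup_{x ∈ 𝒳} Σ_i v_i(x_i)`. -/
noncomputable def Mechanism.OPT {n : ℕ} {A X : Fin n → Type*} (M : Mechanism n A X)
    (v : ∀ i, X i → ℝ) : ℝ :=
  sSup ((fun x : ∀ i, X i => ∑ i, v i (x i)) '' M.feasible)

/-- `OPT(v)` is attained: some feasible allocation profile maximizes welfare. -/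
def Mechanism.OPTAttained {n : ℕ} {A X : Fin n → Type*} (M : Mechanism n A X)
    (v : ∀ i, X i → ℝ) : Prop :=
  ∃ x ∈ M.feasible, ∀ y ∈ M.feasible, (∑ i, v i (y i)) ≤ ∑ i, v i (x i)

/-- `(λ, μ)`-smoothness of a mechanism for the valuation class `V₁ × ⋯ × Vₙ`:
for every valuation profile in the class there are deviations `a*_i(v)` such that
for every action profile `a`,
`Σ_i U_i((a*_i(v), a_{−i}); v_i) ≥ λ·OPT(v) − μ·Σ_i P_i(a)`. -/
def Mechanism.Smooth {n : ℕ} {A X : Fin n → Type*} (M : Mechanism n A X)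
    (V : ∀ i, Set (X i → ℝ)) (lam mu : ℝ) : Prop :=
  ∀ v : ∀ i, X i → ℝ, (∀ i, v i ∈ V i) →
    ∃ astar : ∀ i, A i, ∀ a : ∀ i, A i,
      (∑ i, M.util v (Function.update a i (astar i)) i) ≥
        lam * M.OPT v - mu * ∑ i, M.pay a i

/-- The class `max-V`: valuations expressible as the pointwise maximum of a finite
nonempty family of valuations from `V`. -/
def maxClass {X : Type*} (V : Set (X → ℝ)) : Set (X → ℝ) :=
  {v | ∃ (L : Type) (_ : Fintype L) (_ : Nonempty L) (f : L → X → ℝ),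
    (∀ ℓ, f ℓ ∈ V) ∧ ∀ x, IsGreatest (Set.range fun ℓ => f ℓ x) (v x)}

/-- **Smoothness extends from a valuation class to its closure under maxima**
(Syrgkanis–Tardos): if a mechanism is `(λ, μ)`-smooth for `V₁ × ⋯ × Vₙ` and `OPT`
is attained for every profile considered (profiles from the classes and from their
max-closures), then the mechanism is `(λ, μ)`-smooth for `max-V₁ × ⋯ × max-Vₙ`. -/
theorem smooth_maxClass {n : ℕ} {A X : Fin n → Type*} (M : Mechanism n A X)
    (V : ∀ i, Set (X i → ℝ)) (lam mu : ℝ) (hlam : 0 ≤ lam) (hmu : 0 ≤ mu)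
    (hsmooth : M.Smooth V lam mu)
    (hatt : ∀ v : ∀ i, X i → ℝ, (∀ i, v i ∈ V i) → M.OPTAttained v)
    (hatt' : ∀ v : ∀ i, X i → ℝ, (∀ i, v i ∈ maxClass (V i)) → M.OPTAttained v) :
    M.Smooth (fun i => maxClass (V i)) lam mu := by
  intro v hv
  obtain ⟨xstar, hxf, hxmax⟩ := hatt' v hv
  choose L FL NL f hfV hgrt using hv
  have hpick : ∀ i, ∃ ℓ, f i ℓ (xstar i) = v i (xstar i) := fun i => (hgrt i (xstar i)).1
  choose ℓ hℓ using hpick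
  set v' : ∀ i, X i → ℝ := fun i => f i (ℓ i) with hv'
  have hv'V : ∀ i, v' i ∈ V i := fun i => hfV i (ℓ i)
  obtain ⟨astar, hstar⟩ := hsmooth v' hv'V
  refine ⟨astar, fun a => ?_⟩
  have hle : ∀ i x, v' i x ≤ v i x := fun i x => (hgrt i x).2 ⟨ℓ i, rfl⟩
  have hU : ∀ b i, M.util v' b i ≤ M.util v b i := fun b i => by
    unfold Mechanism.util; linarith [hle i (M.alloc b i)]
  have h1 : (∑ i, M.util v' (Function.update a i (astar i)) i) ≤
      ∑ i, M.util v (Function.update a i (astar i)) i :=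
    Finset.sum_le_sum fun i _ => hU _ i
  obtain ⟨y, hyf, hymax⟩ := hatt v' hv'V
  have hbdd' : BddAbove ((fun x : ∀ i, X i => ∑ i, v' i (x i)) '' M.feasible) :=
    ⟨∑ i, v' i (y i), by rintro _ ⟨z, hz, rfl⟩; exact hymax z hz⟩
  have hOPTv' : (∑ i, v' i (xstar i)) ≤ M.OPT v' := le_csSup hbdd' ⟨xstar, hxf, rfl⟩
  have hOPTv : M.OPT v ≤ ∑ i, v i (xstar i) :=
    csSup_le ⟨_, ⟨xstar, hxf, rfl⟩⟩ (by rintro _ ⟨z, hz, rfl⟩; exact hxmax z hz)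
  have heq : (∑ i, v' i (xstar i)) = ∑ i, v i (xstar i) :=
    Finset.sum_congr rfl fun i _ => hℓ i
  have h2 := hstar a
  have hO : M.OPT v ≤ M.OPT v' := by linarith
  have := mul_le_mul_of_nonneg_left hO hlam
  linarith
end

section
/- Suppose a deterministic mechanism is (λ, μ)-smooth for a valuation class containing the profile v = (v_1, …, v_n), OPT(v) is attained, and for each player i there is an opt-out action a⁰_i ∈ A_i with P_i(a⁰_i, a_{−i}) = 0 for all a_{−i}. Then at every pure Nash equilibrium a (i.e., U_i(a; v_i) ≥ U_i((a'_i, a_{−i}); v_i) for all i and all a'_i ∈ A_i), the social welfare satisfies Σ_i v_i(X(a)_i) ≥ (λ / max{1, μ})·OPT(v). In particular the price of anarchy over pure Nash equilibria is at most max{1, μ}/λ. -/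
/-- **Smooth mechanisms have low price of anarchy at pure Nash equilibria**:
if a mechanism is `(λ, μ)`-smooth for a valuation class containing the (nonnegative)
profile `v`, `OPT(v)` is attained, and each player has an opt-out action with zero
payment, then at every pure Nash equilibrium `a` the social welfare is at least
`(λ / max{1, μ})·OPT(v)`. -/
theorem smooth_implies_poa {n : ℕ} {A X : Fin n → Type*} (M : Mechanism n A X)
    (lam mu : ℝ) (hlam : 0 ≤ lam) (hmu : 0 ≤ mu)
    (v : ∀ i, X i → ℝ) (hv : ∀ i x, 0 ≤ v i x)
    (V : ∀ i, Set (X i → ℝ)) (hmem : ∀ i, v i ∈ V i)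
    (hsmooth : M.Smooth V lam mu)
    (xopt : ∀ i, X i) (hxopt : xopt ∈ M.feasible)
    (hxoptMax : ∀ y ∈ M.feasible, (∑ i, v i (y i)) ≤ ∑ i, v i (xopt i))
    (a0 : ∀ i, A i) (ha0 : ∀ (i : Fin n) (a : ∀ j, A j), M.pay (Function.update a i (a0 i)) i = 0)
    (a : ∀ i, A i)
    (hNash : ∀ (i : Fin n) (a' : A i), M.util v a i ≥ M.util v (Function.update a i a') i) :
    (∑ i, v i (M.alloc a i)) ≥ (lam / max 1 mu) * M.OPT v := by
  obtain ⟨astar, hstar⟩ := hsmooth v hmem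
  set W := ∑ i, v i (M.alloc a i) with hW
  set P := ∑ i, M.pay a i with hP
  have hutil0 : ∀ i, 0 ≤ M.util v a i := by
    intro i
    have h1 := hNash i (a0 i)
    have h0 : (0:ℝ) ≤ M.util v (Function.update a i (a0 i)) i := by
      unfold Mechanism.util; rw [ha0 i a]; simpa using hv _ _
    linarith
  have hPW : P ≤ W := by
    have : ∀ i, M.pay a i ≤ v i (M.alloc a i) := by
      intro i
      have := hutil0 i
      simp [Mechanism.util] at this
      linarith
    exact Finset.sum_le_sum fun i _ => this i
  have hP0 : 0 ≤ P := Finset.sum_nonneg fun i _ => M.pay_nonneg a i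
  have hsum : W - P ≥ lam * M.OPT v - mu * P := by
    have h1 : ∑ i, M.util v a i ≥ ∑ i, M.util v (Function.update a i (astar i)) i :=
      Finset.sum_le_sum fun i _ => hNash i (astar i)
    have h2 : (∑ i, M.util v a i) = W - P := by
      simp [Mechanism.util, Finset.sum_sub_distrib, hW, hP]
    have := le_trans (hstar a) h1
    linarith
  rcases le_total mu 1 with h | h
  · rw [max_eq_left h]
    have : W ≥ lam * M.OPT v + (1 - mu) * P := by linarith
    nlinarith
  · rw [max_eq_right h]
    have hmu1 : 0 < mu := lt_of_lt_of_le one_pos h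
    rw [ge_iff_le, div_mul_eq_mul_div, div_le_iff₀ hmu1]
    nlinarith
end

section
/- Let P_f be the polymatroid of a monotone submodular function f with f(∅) = 0, with ground set E partitioned among n players, and let w : E → ℝ≥0 define linear homogeneous valuations v_i(x) = Σ_{t∈E_i} w_t·x_t. Let x* ∈ P_f maximize Σ_{t∈E} w_t·x_t over P_f. Let b : E → ℝ≥0 be any bid profile and let x ∈ P_f maximize Σ_{t∈E} b_t·x_t over P_f. For each player i, let b^i be the bid profile with b^i_t = (2/3)·w_t for t ∈ E_i and b^i_t = b_t otherwise, and let x^i ∈ P_f be any maximizer of Σ_{t∈E} b^i_t·x_t over P_f. Then Σ_{i=1}^n (1/3)·Σ_{t∈E_i} w_t·x^i_t ≥ (1/3)·Σ_{t∈E} w_t·x*_t − Σ_{t∈E} b_t·x_t. (The first-price greedy polymatroid mechanism is (1/3,1)-smooth for linear homogeneous valuations.) -/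
/-- Membership in the polymatroid `P_f` of a set function `f`:
nonnegative vectors whose partial sums are bounded by `f`. -/
def InPolymatroid {E : Type*} [Fintype E] (f : Finset E → ℝ) (x : E → ℝ) : Prop :=
  (∀ t, 0 ≤ x t) ∧ ∀ S : Finset E, (∑ t ∈ S, x t) ≤ f S

/-!
Let `G c = max {∑ c_t y_t | y ∈ P_f}`. Running the greedy algorithm in decreasing order of `c`
yields a point of `P_f` that is tight on every superlevel set `{c > a}`, so `G` is the Lovász
extension `∫₀^∞ f {c > a} da`. Superlevel sets of `c ⊔ d` and `c ⊓ d` are unions and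
intersections, so `G` is monotone and submodular in the bid vector. Hence the gain
`G (b ⊔ bⁱ) - G b` is at most `G bⁱ - G z`, where `z` is `b` with player `i`'s bids set to `0`,
and this is at most `(2/3) vᵢ(xⁱ)` because `xⁱ` is optimal for `bⁱ`. Summing over the players,
with `(2/3) w ≤ ⨆ᵢ (b ⊔ bⁱ)`, `(2/3) w·x* ≤ G ((2/3) w)` and `G b ≤ b·x`, gives the claim.
-/

open Finset MeasureTheory

def Submodular {α : Type*} [Lattice α] (G : α → ℝ) : Prop :=
  ∀ x y, G (x ⊔ y) + G (x ⊓ y) ≤ G x + G y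

section Lattice

variable {α ι : Type*} [Lattice α] {G : α → ℝ}

theorem fold_max_le_iff (b c : α) (x : ι → α) (I : Finset ι) :
    I.fold max b x ≤ c ↔ b ≤ c ∧ ∀ i ∈ I, x i ≤ c :=
  fold_op_rel_iff_and (r := fun c d => d ≤ c) sup_le_iff

theorem Submodular.sup_sub_le_sub (hG : Submodular G) (hmono : Monotone G) {x y z : α}
    (hz : z ≤ x ⊓ y) : G (x ⊔ y) - G y ≤ G x - G z := by
  linarith [hG x y, hmono hz]

theorem Submodular.fold_max_sub_le_sum [DecidableEq ι] (hG : Submodular G) (hmono : Monotone G)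
    (b : α) (x : ι → α) (I : Finset ι) :
    G (I.fold max b x) - G b ≤ ∑ i ∈ I, (G (b ⊔ x i) - G b) := by
  induction I using Finset.induction_on with
  | empty => simp
  | insert j I hj ih =>
    have hbF : b ≤ I.fold max b x := ((fold_max_le_iff b _ x I).mp le_rfl).1
    have hstep := hG.sup_sub_le_sub hmono (le_inf le_sup_left hbF) (x := b ⊔ x j)
    rw [sup_assoc, sup_eq_right.mpr (le_sup_of_le_right hbF)] at hstep
    rw [fold_insert hj, sum_insert hj]
    linarith

end Lattice

section Greedy

variable {E : Type*} [DecidableEq E] {f : Finset E → ℝ}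

/-- Elements are processed from the end of the list: the head receives its marginal value over
the tail. -/
noncomputable def greedyVec (f : Finset E → ℝ) : List E → E → ℝ
  | [] => 0
  | e :: l => greedyVec f l + Pi.single e (f (insert e l.toFinset) - f l.toFinset)

theorem greedyVec_eq_zero {l : List E} {t : E} (ht : t ∉ l) : greedyVec f l t = 0 := by
  induction l with
  | nil => rfl
  | cons e l ih =>
    rw [List.mem_cons, not_or] at ht
    simp [greedyVec, ih ht.2, ht.1]

theorem sum_greedyVec_cons (e : E) (l : List E) (S : Finset E) :
    ∑ t ∈ S, greedyVec f (e :: l) t =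
      ∑ t ∈ S, greedyVec f l t + if e ∈ S then f (insert e l.toFinset) - f l.toFinset else 0 := by
  simp only [greedyVec, Pi.add_apply, sum_add_distrib, sum_pi_single']

theorem greedyVec_nonneg (hf : Monotone f) (l : List E) (t : E) : 0 ≤ greedyVec f l t := by
  induction l with
  | nil => simp [greedyVec]
  | cons e l ih =>
    simp only [greedyVec, Pi.add_apply, Pi.single_apply]
    have := hf (subset_insert e l.toFinset)
    split_ifs <;> linarith

theorem sum_greedyVec_le (hf0 : f ∅ = 0) (hsub : Submodular f) {l : List E} (hl : l.Nodup)
    (S : Finset E) : ∑ t ∈ S, greedyVec f l t ≤ f (S ∩ l.toFinset) := by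
  induction l with
  | nil => simp [greedyVec, hf0]
  | cons e l ih =>
    have hl := (List.nodup_cons.mp hl).2
    rw [sum_greedyVec_cons, List.toFinset_cons]
    split_ifs with he
    · have hunion : S ∩ insert e l.toFinset ⊔ l.toFinset = insert e l.toFinset := by
        ext t; simp only [sup_eq_union, mem_union, mem_inter, mem_insert]; grind
      have hinter : S ∩ insert e l.toFinset ⊓ l.toFinset = S ∩ l.toFinset := by
        ext t; simp only [inf_eq_inter, mem_inter, mem_insert]; grind
      have := hsub (S ∩ insert e l.toFinset) l.toFinset
      rw [hunion, hinter] at this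
      linarith [ih hl]
    · rw [inter_insert_of_notMem he]
      simpa using ih hl

theorem sum_greedyVec_suffix (hf0 : f ∅ = 0) {l l' : List E} (hl : l.Nodup) (h : l' <:+ l) :
    ∑ t ∈ l'.toFinset, greedyVec f l t = f l'.toFinset := by
  induction l generalizing l' with
  | nil => simp_all [greedyVec]
  | cons e l ih =>
    obtain ⟨hel, hl⟩ := List.nodup_cons.mp hl
    rw [sum_greedyVec_cons]
    rcases List.suffix_cons_iff.mp h with rfl | h
    · rw [List.toFinset_cons, if_pos (mem_insert_self e _), sum_insert (by simpa using hel),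
        ih hl List.suffix_rfl, greedyVec_eq_zero hel]
      ring
    · have he : e ∉ l'.toFinset := fun he => hel (h.subset (List.mem_toFinset.mp he))
      rw [if_neg he, ih hl h, add_zero]

theorem exists_suffix_toFinset_eq_filter {c : E → ℝ} {l : List E}
    (hl : l.Pairwise (fun s t => c s ≤ c t)) (a : ℝ) :
    ∃ l', l' <:+ l ∧ l'.toFinset = l.toFinset.filter (fun t => a < c t) := by
  induction l with
  | nil => exact ⟨[], List.suffix_rfl, rfl⟩
  | cons e l ih =>
    obtain ⟨hel, hl⟩ := List.pairwise_cons.mp hl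
    by_cases hae : a < c e
    · refine ⟨e :: l, List.suffix_rfl, (filter_true_of_mem fun t ht => ?_).symm⟩
      rcases List.mem_cons.mp (List.mem_toFinset.mp ht) with rfl | ht
      exacts [hae, hae.trans_le (hel t ht)]
    · obtain ⟨l', hl', heq⟩ := ih hl
      refine ⟨l', hl'.trans (List.suffix_cons e l), ?_⟩
      rw [List.toFinset_cons, filter_insert, if_neg hae, heq]

end Greedy

theorem integral_ite_lt_one {r M : ℝ} (hr0 : 0 ≤ r) (hrM : r ≤ M) :
    ∫ a in (0)..M, (if a < r then (1 : ℝ) else 0) = r := by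
  rw [intervalIntegral.integral_of_le (hr0.trans hrM)]
  have hind : (fun a : ℝ => if a < r then (1 : ℝ) else 0) = (Set.Iio r).indicator 1 := by
    ext a; simp [Set.indicator_apply]
  have hIoo : Set.Iio r ∩ Set.Ioc 0 M = Set.Ioo 0 r := by
    ext a; simp only [Set.mem_inter_iff, Set.mem_Iio, Set.mem_Ioc, Set.mem_Ioo]
    constructor <;> intro h <;> refine ⟨?_, ?_⟩ <;> (try constructor) <;> linarith [h.1, h.2]
  rw [hind, integral_indicator_one measurableSet_Iio, measureReal_restrict_apply measurableSet_Iio,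
    hIoo, Real.volume_real_Ioo_of_le hr0, sub_zero]

section LovaszExtension

variable {E : Type*} [Fintype E] {f : Finset E → ℝ}

noncomputable def superlevelSet (c : E → ℝ) (a : ℝ) : Finset E := univ.filter fun t => a < c t

theorem superlevelSet_antitone (c : E → ℝ) : Antitone (superlevelSet c) :=
  fun _ _ hab _ ht => by
    simp only [superlevelSet, mem_filter, mem_univ, true_and] at ht ⊢
    exact hab.trans_lt ht

theorem superlevelSet_mono {c d : E → ℝ} (hcd : c ≤ d) (a : ℝ) :
    superlevelSet c a ⊆ superlevelSet d a := fun t ht => by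
  simp only [superlevelSet, mem_filter, mem_univ, true_and] at ht ⊢
  exact ht.trans_le (hcd t)

theorem intervalIntegrable_comp_superlevelSet {F : Finset E → ℝ} (hF : Monotone F)
    (c : E → ℝ) (p q : ℝ) : IntervalIntegrable (fun a => F (superlevelSet c a)) volume p q :=
  (hF.comp_antitone (superlevelSet_antitone c)).intervalIntegrable

theorem sum_mul_eq_integral_sum_superlevelSet {c : E → ℝ} {M : ℝ} (hc0 : 0 ≤ c)
    (hcM : ∀ t, c t ≤ M) (y : E → ℝ) :
    ∑ t, c t * y t = ∫ a in (0)..M, ∑ t ∈ superlevelSet c a, y t := by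
  have hind : ∀ t, IntervalIntegrable (fun a => if a < c t then (1 : ℝ) else 0) volume 0 M :=
    fun t => Antitone.intervalIntegrable fun a a' haa' => by
      split_ifs <;> first | (exfalso; linarith) | norm_num
  calc ∑ t, c t * y t = ∑ t, ∫ a in (0)..M, y t * (if a < c t then 1 else 0) := by
        refine sum_congr rfl fun t _ => ?_
        rw [intervalIntegral.integral_const_mul, integral_ite_lt_one (hc0 t) (hcM t), mul_comm]
    _ = ∫ a in (0)..M, ∑ t, y t * (if a < c t then 1 else 0) :=
        (intervalIntegral.integral_finsetSum fun t _ => (hind t).const_mul (y t)).symm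
    _ = ∫ a in (0)..M, ∑ t ∈ superlevelSet c a, y t := by
        simp only [superlevelSet, sum_filter, mul_boole]

/-- The Lovász extension of `f`, truncated at `M`; the truncation is harmless for bids
`0 ≤ c ≤ M`, whose superlevel sets above `M` are empty. -/
noncomputable def lovaszExt (f : Finset E → ℝ) (M : ℝ) (c : E → ℝ) : ℝ :=
  ∫ a in (0)..M, f (superlevelSet c a)

theorem lovaszExt_mono (hf : Monotone f) {M : ℝ} (hM : 0 ≤ M) : Monotone (lovaszExt f M) :=
  fun _ _ hcd => intervalIntegral.integral_mono_on hM
    (intervalIntegrable_comp_superlevelSet hf _ _ _) (intervalIntegrable_comp_superlevelSet hf _ _ _)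
    fun a _ => hf (superlevelSet_mono hcd a)

theorem sum_mul_le_lovaszExt (hf : Monotone f) {y : E → ℝ} (hy : InPolymatroid f y)
    {c : E → ℝ} {M : ℝ} (hc0 : 0 ≤ c) (hcM : ∀ t, c t ≤ M) (hM : 0 ≤ M) :
    ∑ t, c t * y t ≤ lovaszExt f M c := by
  have hsum : Monotone fun S : Finset E => ∑ t ∈ S, y t :=
    fun S T hST => sum_le_sum_of_subset_of_nonneg hST fun t _ _ => hy.1 t
  rw [sum_mul_eq_integral_sum_superlevelSet hc0 hcM]
  exact intervalIntegral.integral_mono_on hM (intervalIntegrable_comp_superlevelSet hsum _ _ _)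
    (intervalIntegrable_comp_superlevelSet hf _ _ _) fun a _ => hy.2 _

variable [DecidableEq E]

theorem superlevelSet_sup (c d : E → ℝ) (a : ℝ) :
    superlevelSet (c ⊔ d) a = superlevelSet c a ⊔ superlevelSet d a := by
  ext t; simp [superlevelSet]

theorem superlevelSet_inf (c d : E → ℝ) (a : ℝ) :
    superlevelSet (c ⊓ d) a = superlevelSet c a ⊓ superlevelSet d a := by
  ext t; simp [superlevelSet]

theorem lovaszExt_submodular (hf : Monotone f) (hsub : Submodular f) {M : ℝ} (hM : 0 ≤ M) :
    Submodular (lovaszExt f M) := fun c d => by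
  have hint := fun c => intervalIntegrable_comp_superlevelSet hf c 0 M
  simp only [lovaszExt]
  rw [← intervalIntegral.integral_add (hint _) (hint _),
    ← intervalIntegral.integral_add (hint _) (hint _)]
  refine intervalIntegral.integral_mono_on hM ((hint _).add (hint _)) ((hint _).add (hint _))
    fun a _ => ?_
  rw [superlevelSet_sup, superlevelSet_inf]
  exact hsub _ _

theorem exists_inPolymatroid_sum_superlevelSet_eq (hf0 : f ∅ = 0) (hf : Monotone f)
    (hsub : Submodular f) (c : E → ℝ) :
    ∃ y, InPolymatroid f y ∧ ∀ a, ∑ t ∈ superlevelSet c a, y t = f (superlevelSet c a) := by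
  set l := (univ : Finset E).toList.mergeSort fun s t => decide (c s ≤ c t)
  have hperm : l.Perm univ.toList := List.mergeSort_perm _ _
  have hnodup : l.Nodup := hperm.nodup_iff.mpr (nodup_toList _)
  have hsorted : l.Pairwise fun s t => c s ≤ c t := by
    simpa using List.pairwise_mergeSort (le := fun s t => decide (c s ≤ c t))
      (fun _ _ _ h₁ h₂ => by simp only [decide_eq_true_eq] at *; exact h₁.trans h₂)
      (fun s t => by simpa using le_total (c s) (c t)) univ.toList
  have huniv : l.toFinset = univ := eq_univ_of_forall fun t => by simp [hperm.mem_iff]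
  refine ⟨greedyVec f l, ⟨greedyVec_nonneg hf l, fun S => ?_⟩, fun a => ?_⟩
  · exact (sum_greedyVec_le hf0 hsub hnodup S).trans (hf inter_subset_left)
  · obtain ⟨l', hl', heq⟩ := exists_suffix_toFinset_eq_filter hsorted a
    rw [huniv] at heq
    rw [superlevelSet, ← heq, sum_greedyVec_suffix hf0 hnodup hl']

theorem lovaszExt_le_sum_mul_of_forall_le (hf0 : f ∅ = 0) (hf : Monotone f)
    (hsub : Submodular f) {c x : E → ℝ} {M : ℝ} (hc0 : 0 ≤ c) (hcM : ∀ t, c t ≤ M)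
    (hx : ∀ y, InPolymatroid f y → ∑ t, c t * y t ≤ ∑ t, c t * x t) :
    lovaszExt f M c ≤ ∑ t, c t * x t := by
  obtain ⟨y, hy, htight⟩ := exists_inPolymatroid_sum_superlevelSet_eq hf0 hf hsub c
  refine le_of_eq_of_le ?_ (hx y hy)
  rw [sum_mul_eq_integral_sum_superlevelSet hc0 hcM, lovaszExt]
  exact intervalIntegral.integral_congr fun a _ => (htight a).symm

theorem lovaszExt_sup_sub_le_sum_mul (hf0 : f ∅ = 0) (hf : Monotone f) (hsub : Submodular f)
    {b c z x : E → ℝ} {M : ℝ} (hM : 0 ≤ M) (hz0 : 0 ≤ z) (hz : z ≤ c ⊓ b) (hcM : ∀ t, c t ≤ M)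
    (hx : InPolymatroid f x) (hxOpt : ∀ y, InPolymatroid f y → ∑ t, c t * y t ≤ ∑ t, c t * x t) :
    lovaszExt f M (c ⊔ b) - lovaszExt f M b ≤ ∑ t, (c t - z t) * x t := by
  have hzc : z ≤ c := hz.trans inf_le_left
  have hc0 : 0 ≤ c := hz0.trans hzc
  have hsup := (lovaszExt_submodular hf hsub hM).sup_sub_le_sub (lovaszExt_mono hf hM) hz
  have hc := lovaszExt_le_sum_mul_of_forall_le hf0 hf hsub hc0 hcM hxOpt
  have hz' := sum_mul_le_lovaszExt hf hx hz0 (fun t => (hzc t).trans (hcM t)) hM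
  simp only [sub_mul, sum_sub_distrib]
  linarith

theorem lovaszExt_sup_ite_sub_le (hf0 : f ∅ = 0) (hf : Monotone f) (hsub : Submodular f)
    {M : ℝ} (hM : 0 ≤ M) {b u x : E → ℝ} (p : E → Prop) [DecidablePred p] (hb0 : 0 ≤ b)
    (hu0 : 0 ≤ u) (hbM : ∀ t, b t ≤ M) (huM : ∀ t, u t ≤ M) (hx : InPolymatroid f x)
    (hxOpt : ∀ y, InPolymatroid f y →
      ∑ t, (if p t then u t else b t) * y t ≤ ∑ t, (if p t then u t else b t) * x t) :
    lovaszExt f M (b ⊔ fun t => if p t then u t else b t) - lovaszExt f M b ≤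
      ∑ t ∈ univ.filter p, u t * x t := by
  set rest : E → ℝ := fun t => if p t then 0 else b t
  have hrest0 : 0 ≤ rest := fun t => by dsimp only [rest]; split_ifs; exacts [le_rfl, hb0 t]
  have hrest : rest ≤ (fun t => if p t then u t else b t) ⊓ b := fun t => by
    simp only [rest, Pi.inf_apply]; split_ifs
    exacts [le_min (hu0 t) (hb0 t), le_min le_rfl le_rfl]
  have hdevM : ∀ t, (if p t then u t else b t) ≤ M := fun t => by
    split_ifs; exacts [huM t, hbM t]
  rw [sup_comm]
  refine (lovaszExt_sup_sub_le_sum_mul hf0 hf hsub hM hrest0 hrest hdevM hx hxOpt).trans_eq ?_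
  rw [sum_filter]
  refine sum_congr rfl fun t _ => ?_
  dsimp only [rest]; split_ifs <;> ring

end LovaszExtension

theorem greedy_polymatroid_smooth_general
    {E : Type*} [DecidableEq E] [Fintype E]
    (f : Finset E → ℝ) (hf0 : f ∅ = 0)
    (hfmono : ∀ S T : Finset E, S ⊆ T → f S ≤ f T)
    (hfsub : ∀ S T : Finset E, f (S ∪ T) + f (S ∩ T) ≤ f S + f T)
    (n : ℕ) (player : E → Fin n)
    (w : E → ℝ) (hw : ∀ t, 0 ≤ w t)
    (xstar : E → ℝ) (hxstar : InPolymatroid f xstar)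
    (b : E → ℝ) (hb : ∀ t, 0 ≤ b t)
    (x : E → ℝ) (hx : InPolymatroid f x)
    (hxOpt : ∀ y : E → ℝ, InPolymatroid f y → (∑ t, b t * y t) ≤ ∑ t, b t * x t)
    (xdev : Fin n → E → ℝ) (hxdev : ∀ i, InPolymatroid f (xdev i))
    (hxdevOpt : ∀ i, ∀ y : E → ℝ, InPolymatroid f y →
      (∑ t, (if player t = i then (2/3) * w t else b t) * y t) ≤
        ∑ t, (if player t = i then (2/3) * w t else b t) * xdev i t) :
    (∑ i : Fin n, (1/3) * ∑ t ∈ Finset.univ.filter (fun t => player t = i), w t * xdev i t) ≥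
      (1/3) * (∑ t, w t * xstar t) - ∑ t, b t * x t := by
  have hf : Monotone f := fun S T => hfmono S T
  have hsub : Submodular f := hfsub
  set M := ∑ t, (b t + w t)
  have hM : 0 ≤ M := sum_nonneg fun t _ => add_nonneg (hb t) (hw t)
  have hbwM : ∀ t, b t + w t ≤ M := fun t =>
    single_le_sum (fun s _ => add_nonneg (hb s) (hw s)) (mem_univ t)
  let u : E → ℝ := fun t => (2/3) * w t
  have hu0 : 0 ≤ u := fun t => mul_nonneg (by norm_num) (hw t)
  have huM : ∀ t, u t ≤ M := fun t => by dsimp only [u]; linarith [hb t, hw t, hbwM t]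
  have hbM : ∀ t, b t ≤ M := fun t => by linarith [hw t, hbwM t]
  let dev : Fin n → E → ℝ := fun i t => if player t = i then u t else b t
  have hplayer : ∀ i, lovaszExt f M (b ⊔ dev i) - lovaszExt f M b ≤
      ∑ t ∈ univ.filter (fun t => player t = i), u t * xdev i t := fun i =>
    lovaszExt_sup_ite_sub_le hf0 hf hsub hM _ hb hu0 hbM huM (hxdev i) (hxdevOpt i)
  have hu_le : u ≤ univ.fold max b dev := fun t => by
    simpa [dev] using ((fold_max_le_iff b _ dev univ).mp le_rfl).2 (player t) (mem_univ _) t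
  have hwelfare : (2/3) * ∑ t, w t * xstar t ≤ lovaszExt f M u := by
    simpa [u, mul_sum, mul_assoc] using sum_mul_le_lovaszExt hf hxstar hu0 huM hM
  have hbid : lovaszExt f M b ≤ ∑ t, b t * x t :=
    lovaszExt_le_sum_mul_of_forall_le hf0 hf hsub hb hbM hxOpt
  have hbid0 : 0 ≤ ∑ t, b t * x t := sum_nonneg fun t _ => mul_nonneg (hb t) (hx.1 t)
  have hsum := ((lovaszExt_submodular hf hsub hM).fold_max_sub_le_sum (lovaszExt_mono hf hM) b dev
    univ).trans (sum_le_sum fun i _ => hplayer i)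
  have hgain : ∑ i, ∑ t ∈ univ.filter (fun t => player t = i), u t * xdev i t =
      2 * ∑ i, (1/3) * ∑ t ∈ univ.filter (fun t => player t = i), w t * xdev i t := by
    simp only [u, mul_sum]
    exact sum_congr rfl fun i _ => sum_congr rfl fun t _ => by ring
  linarith [lovaszExt_mono hf hM hu_le]

/-- **Smoothness of the first-price greedy polymatroid mechanism for linear
homogeneous valuations.**  `f` is a monotone submodular set function with `f ∅ = 0`,
and `P_f` its polymatroid.  The ground set is partitioned among `n` players via
`player : E → Fin n`; player `i`'s valuation is `Σ_{t ∈ E_i} w_t·x_t`.  `x*` maximizes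
welfare over `P_f`; `x` is the (greedy) outcome maximizing `Σ_t b_t·x_t` over `P_f`
for the bid profile `b`; `xdev i` is any outcome when player `i` unilaterally deviates
to bidding `(2/3)·w_t`.  Then
`Σ_i (1/3)·Σ_{t∈E_i} w_t·(xdev i)_t ≥ (1/3)·Σ_t w_t·x*_t − Σ_t b_t·x_t`,
i.e. the mechanism is `(1/3, 1)`-smooth. -/
theorem greedy_polymatroid_smooth
    {E : Type*} [DecidableEq E] [Fintype E]
    (f : Finset E → ℝ) (hf0 : f ∅ = 0)
    (hfmono : ∀ S T : Finset E, S ⊆ T → f S ≤ f T)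
    (hfsub : ∀ S T : Finset E, f (S ∪ T) + f (S ∩ T) ≤ f S + f T)
    (n : ℕ) (player : E → Fin n)
    (w : E → ℝ) (hw : ∀ t, 0 ≤ w t)
    (xstar : E → ℝ) (hxstar : InPolymatroid f xstar)
    (hxstarOpt : ∀ y : E → ℝ, InPolymatroid f y →
      (∑ t, w t * y t) ≤ ∑ t, w t * xstar t)
    (b : E → ℝ) (hb : ∀ t, 0 ≤ b t)
    (x : E → ℝ) (hx : InPolymatroid f x)
    (hxOpt : ∀ y : E → ℝ, InPolymatroid f y → (∑ t, b t * y t) ≤ ∑ t, b t * x t)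
    (xdev : Fin n → E → ℝ) (hxdev : ∀ i, InPolymatroid f (xdev i))
    (hxdevOpt : ∀ i, ∀ y : E → ℝ, InPolymatroid f y →
      (∑ t, (if player t = i then (2/3) * w t else b t) * y t) ≤
        ∑ t, (if player t = i then (2/3) * w t else b t) * xdev i t) :
    (∑ i : Fin n, (1/3) * ∑ t ∈ Finset.univ.filter (fun t => player t = i), w t * xdev i t) ≥
      (1/3) * (∑ t, w t * xstar t) - ∑ t, b t * x t :=
  greedy_polymatroid_smooth_general f hf0 hfmono hfsub n player w hw xstar hxstar b hb x hx hxOpt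
    xdev hxdev hxdevOpt
end
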